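/- arXiv:math/0105173 — 4 statements merged into one kernel-verified Lean document; each statement's English description precedes it below -/
import Mathlib

section
/- Let (u_{mn}(t)) be a matrix over ℤ[t,t^{-1}] indexed by a set with a partial order ≤ such that every element has only finitely many elements below it, with u_{mm}(t) = 1, u_{mn}(t) = 0 unless n ≤ m, and satisfying the involutivity condition Σ_{s: n ≤ s ≤ m} u_{ms}(t^{-1}) u_{sn}(t) = δ_{mn}. Then there exists a unique matrix (Z_{mn}(t)) with Z_{mm}(t) = 1, Z_{mn}(t) ∈ t^{-1}ℤ[t^{-1}] for n < m, Z_{mn}(t) = 0 unless n ≤ m, and Z_{mn}(t^{-1}) = Σ_{s: n ≤ s ≤ m} u_{ms}(t) Z_{sn}(t). -/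
open scoped BigOperators Classical
open LaurentPolynomial

section KLaux

variable {α : Type} [PartialOrder α]

private lemma kl_coeff_add (p q : LaurentPolynomial ℤ) (k : ℤ) : (p + q).coeff k = p.coeff k + q.coeff k := rfl
private lemma kl_coeff_sub (p q : LaurentPolynomial ℤ) (k : ℤ) : (p - q).coeff k = p.coeff k - q.coeff k := rfl
private lemma kl_coeff_neg (p : LaurentPolynomial ℤ) (k : ℤ) : (-p).coeff k = -(p.coeff k) := rfl
private lemma kl_coeff_zero (k : ℤ) : (0 : LaurentPolynomial ℤ).coeff k = 0 := rfl

private theorem kl_wf (hfin : ∀ m : α, {s | s ≤ m}.Finite) :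
    WellFounded ((· < ·) : α → α → Prop) := by
  constructor
  intro m
  have key : ∀ N : ℕ, ∀ m : α, (hfin m).toFinset.card ≤ N → Acc (· < ·) m := by
    intro N
    induction N with
    | zero =>
      intro m hm
      exfalso
      have h1 : m ∈ (hfin m).toFinset := by simp
      have := Finset.card_pos.mpr ⟨m, h1⟩
      omega
    | succ N ih =>
      intro m hm
      constructor
      intro s hs
      apply ih
      have hsub : (hfin s).toFinset ⊂ (hfin m).toFinset := by
        rw [Finset.ssubset_def]
        constructor
        · intro x hx
          simp only [Set.Finite.mem_toFinset, Set.mem_setOf_eq] at *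
          exact hx.trans hs.le
        · intro hsub'
          have hms : m ∈ (hfin s).toFinset := hsub' (by simp)
          simp only [Set.Finite.mem_toFinset, Set.mem_setOf_eq] at hms
          exact absurd (lt_of_le_of_lt hms hs) (lt_irrefl m)
      have := Finset.card_lt_card hsub
      omega
  exact key _ m le_rfl

/-- The recursion functional for the canonical basis matrix. -/
noncomputable def klF (hfin : ∀ m : α, {s | s ≤ m}.Finite)
    (u : α → α → LaurentPolynomial ℤ) (n : α) (m : α)
    (rec : ∀ s, s < m → LaurentPolynomial ℤ) : LaurentPolynomial ℤ :=
  if m = n then (1 : LaurentPolynomial ℤ) else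
    (AddMonoidAlgebra.ofCoeff (Finsupp.filter (fun k => k < 0)
      (invert (∑ s ∈ ((hfin m).toFinset.filter (fun s => n ≤ s ∧ s ≠ m)).attach,
        u m s.1 * rec s.1
          (lt_of_le_of_ne ((hfin m).mem_toFinset.mp (Finset.mem_filter.mp s.2).1)
            (Finset.mem_filter.mp s.2).2.2))).coeff) : LaurentPolynomial ℤ)

/-- The canonical basis matrix, defined by well-founded recursion. -/
noncomputable def klZ (hfin : ∀ m : α, {s | s ≤ m}.Finite)
    (u : α → α → LaurentPolynomial ℤ) (n : α) : α → LaurentPolynomial ℤ :=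
  (kl_wf hfin).fix (klF hfin u n)

private theorem klZ_eq (hfin : ∀ m : α, {s | s ≤ m}.Finite)
    (u : α → α → LaurentPolynomial ℤ) (n m : α) :
    klZ hfin u n m = if m = n then (1 : LaurentPolynomial ℤ) else
      (AddMonoidAlgebra.ofCoeff (Finsupp.filter (fun k => k < 0)
        (invert (∑ s ∈ (hfin m).toFinset.filter (fun s => n ≤ s ∧ s ≠ m),
          u m s * klZ hfin u n s)).coeff) : LaurentPolynomial ℤ) := by
  have h := WellFounded.fix_eq (kl_wf hfin) (klF hfin u n) m
  rw [klZ, h, klF]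
  congr 1
  congr 1
  congr 1
  congr 1
  congr 1
  exact Finset.sum_attach _ (fun s => u m s * klZ hfin u n s)

private theorem klZ_self (hfin : ∀ m : α, {s | s ≤ m}.Finite)
    (u : α → α → LaurentPolynomial ℤ) (n : α) : klZ hfin u n n = 1 := by
  rw [klZ_eq, if_pos rfl]

private theorem klZ_zero (hfin : ∀ m : α, {s | s ≤ m}.Finite)
    (u : α → α → LaurentPolynomial ℤ) {n m : α} (h : ¬ n ≤ m) : klZ hfin u n m = 0 := by
  rw [klZ_eq, if_neg (by rintro rfl; exact h le_rfl)]
  have he : (hfin m).toFinset.filter (fun s => n ≤ s ∧ s ≠ m) = ∅ := by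
    apply Finset.filter_false_of_mem
    intro s hs hns
    exact h (hns.1.trans ((hfin m).mem_toFinset.mp hs))
  rw [he, Finset.sum_empty, map_zero, AddMonoidAlgebra.coeff_zero, Finsupp.filter_zero,
    AddMonoidAlgebra.ofCoeff_zero]

private theorem klZ_negdeg (hfin : ∀ m : α, {s | s ≤ m}.Finite)
    (u : α → α → LaurentPolynomial ℤ) {n m : α} (h : m ≠ n) (k : ℤ) (hk : 0 ≤ k) :
    (klZ hfin u n m).coeff k = 0 := by
  rw [klZ_eq, if_neg h, AddMonoidAlgebra.coeff_ofCoeff, Finsupp.filter_apply, if_neg (by omega)]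

private theorem klZ_main (hfin : ∀ m : α, {s | s ≤ m}.Finite)
    (u : α → α → LaurentPolynomial ℤ)
    (hu1 : ∀ m, u m m = 1) (hu0 : ∀ m n, ¬ n ≤ m → u m n = 0)
    (hinv : ∀ m n : α,
      ∑ s ∈ (hfin m).toFinset.filter (fun s => n ≤ s), invert (u m s) * u s n
        = if m = n then 1 else 0)
    (n m : α) :
    invert (klZ hfin u n m)
      = ∑ s ∈ (hfin m).toFinset.filter (fun s => n ≤ s), u m s * klZ hfin u n s := by
  refine (kl_wf hfin).induction
    (C := fun m => invert (klZ hfin u n m)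
      = ∑ s ∈ (hfin m).toFinset.filter (fun s => n ≤ s), u m s * klZ hfin u n s) m ?_
  clear m
  intro m IH
  by_cases hnm : n ≤ m
  swap
  · rw [klZ_zero hfin u hnm, map_zero]
    symm
    apply Finset.sum_eq_zero
    intro s hs
    simp only [Finset.mem_filter, Set.Finite.mem_toFinset, Set.mem_setOf_eq] at hs
    exact absurd (hs.2.trans hs.1) hnm
  by_cases hmn : m = n
  · subst hmn
    rw [klZ_self, map_one]
    have hT : (hfin m).toFinset.filter (fun s => m ≤ s) = {m} := by
      ext s
      simp only [Finset.mem_filter, Set.Finite.mem_toFinset, Set.mem_setOf_eq,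
        Finset.mem_singleton]
      constructor
      · rintro ⟨h1, h2⟩; exact le_antisymm h1 h2
      · rintro rfl; exact ⟨le_rfl, le_rfl⟩
    rw [hT, Finset.sum_singleton, hu1, klZ_self, one_mul]
  -- main case : n < m
  set Z := klZ hfin u n with hZdef
  set T : Finset α := (hfin m).toFinset.filter (fun s => n ≤ s) with hTdef
  have hmemT : ∀ s ∈ T, s ≤ m ∧ n ≤ s := by
    intro s hs
    simp only [hTdef, Finset.mem_filter, Set.Finite.mem_toFinset, Set.mem_setOf_eq] at hs
    exact hs
  have hmT : m ∈ T := by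
    simp only [hTdef, Finset.mem_filter, Set.Finite.mem_toFinset, Set.mem_setOf_eq]
    exact ⟨le_rfl, hnm⟩
  set F : LaurentPolynomial ℤ := ∑ s ∈ T.erase m, u m s * Z s with hFdef
  have hSm : (hfin m).toFinset.filter (fun s => n ≤ s ∧ s ≠ m) = T.erase m := by
    ext s
    simp only [hTdef, Finset.mem_filter, Set.Finite.mem_toFinset, Set.mem_setOf_eq,
      Finset.mem_erase]
    tauto
  have hZm : Z m = AddMonoidAlgebra.ofCoeff (Finsupp.filter (fun k => k < 0) (invert F).coeff) := by
    rw [hZdef, klZ_eq, if_neg hmn, hSm, hFdef]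
  -- the double sum G
  have inner_eq : ∀ s ∈ T,
      (∑ r ∈ (hfin s).toFinset.filter (fun r => n ≤ r), u s r * Z r)
        = ∑ r ∈ T, u s r * Z r := by
    intro s hs
    apply Finset.sum_subset
    · intro r hr
      simp only [Finset.mem_filter, Set.Finite.mem_toFinset, Set.mem_setOf_eq] at hr ⊢
      simp only [hTdef, Finset.mem_filter, Set.Finite.mem_toFinset, Set.mem_setOf_eq]
      exact ⟨hr.1.trans (hmemT s hs).1, hr.2⟩
    · intro r hr hnr
      have hnle : ¬ r ≤ s := by
        intro hrs
        apply hnr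
        simp only [Finset.mem_filter, Set.Finite.mem_toFinset, Set.mem_setOf_eq]
        exact ⟨hrs, (hmemT r hr).2⟩
      rw [hu0 s r hnle, zero_mul]
  have hdelta : ∀ r ∈ T, (∑ s ∈ T, invert (u m s) * u s r) = if m = r then 1 else 0 := by
    intro r hr
    rw [← hinv m r]
    symm
    apply Finset.sum_subset
    · intro s hs
      simp only [Finset.mem_filter, Set.Finite.mem_toFinset, Set.mem_setOf_eq] at hs
      simp only [hTdef, Finset.mem_filter, Set.Finite.mem_toFinset, Set.mem_setOf_eq]
      exact ⟨hs.1, (hmemT r hr).2.trans hs.2⟩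
    · intro s hs hns
      have hnle : ¬ r ≤ s := by
        intro hrs
        apply hns
        simp only [Finset.mem_filter, Set.Finite.mem_toFinset, Set.mem_setOf_eq]
        exact ⟨(hmemT s hs).1, hrs⟩
      rw [hu0 s r hnle, mul_zero]
  have hGval : ∑ s ∈ T, invert (u m s)
      * (∑ r ∈ (hfin s).toFinset.filter (fun r => n ≤ r), u s r * Z r) = Z m := by
    calc ∑ s ∈ T, invert (u m s)
        * (∑ r ∈ (hfin s).toFinset.filter (fun r => n ≤ r), u s r * Z r)
        = ∑ s ∈ T, invert (u m s) * ∑ r ∈ T, u s r * Z r := by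
          apply Finset.sum_congr rfl
          intro s hs
          rw [inner_eq s hs]
      _ = ∑ s ∈ T, ∑ r ∈ T, invert (u m s) * u s r * Z r := by
          apply Finset.sum_congr rfl
          intro s _
          rw [Finset.mul_sum]
          apply Finset.sum_congr rfl
          intro r _
          ring
      _ = ∑ r ∈ T, (∑ s ∈ T, invert (u m s) * u s r) * Z r := by
          rw [Finset.sum_comm]
          apply Finset.sum_congr rfl
          intro r _
          rw [Finset.sum_mul]
      _ = ∑ r ∈ T, (if m = r then 1 else 0) * Z r := by
          apply Finset.sum_congr rfl
          intro r hr
          rw [hdelta r hr]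
      _ = Z m := by
          rw [Finset.sum_eq_single m]
          · rw [if_pos rfl, one_mul]
          · intro r _ hrm
            rw [if_neg (fun h => hrm h.symm), zero_mul]
          · intro h
            exact absurd hmT h
  have hGval2 : ∑ s ∈ T, invert (u m s)
      * (∑ r ∈ (hfin s).toFinset.filter (fun r => n ≤ r), u s r * Z r)
        = Z m + F + invert F := by
    rw [← Finset.add_sum_erase T _ hmT]
    have hsplit : ∀ s ∈ T.erase m, invert (u m s)
        * (∑ r ∈ (hfin s).toFinset.filter (fun r => n ≤ r), u s r * Z r)
          = invert (u m s * Z s) := by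
      intro s hs
      have hslt : s < m :=
        lt_of_le_of_ne (hmemT s (Finset.mem_of_mem_erase hs)).1 (Finset.ne_of_mem_erase hs)
      rw [← IH s hslt, ← map_mul]
    rw [Finset.sum_congr rfl hsplit, ← map_sum, ← hFdef]
    have hterm : invert (u m m)
        * (∑ r ∈ (hfin m).toFinset.filter (fun r => n ≤ r), u m r * Z r) = Z m + F := by
      rw [hu1, map_one, one_mul, ← hTdef, ← Finset.add_sum_erase T _ hmT, hu1, one_mul, ← hFdef]
    rw [hterm]
  have hFF : F + invert F = 0 := by
    have h := hGval2.symm.trans hGval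
    rw [add_assoc] at h
    exact (left_eq_add.mp h.symm)
  have hFneg : ∀ k : ℤ, F.coeff (-k) = -(F.coeff k) := by
    intro k
    have h : (F + invert F).coeff k = (0 : LaurentPolynomial ℤ).coeff k := by rw [hFF]
    rw [kl_coeff_add, kl_coeff_zero, invert_apply] at h
    linarith
  have hF0 : F.coeff 0 = 0 := by
    have := hFneg 0
    rw [neg_zero] at this
    linarith
  -- conclude
  rw [← Finset.add_sum_erase T _ hmT, hu1, one_mul, ← hFdef]
  ext k
  rw [invert_apply, kl_coeff_add, hZm, AddMonoidAlgebra.coeff_ofCoeff, Finsupp.filter_apply,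
    Finsupp.filter_apply]
  rcases lt_trichotomy k 0 with hk | hk | hk
  · rw [if_neg (by omega), if_pos hk, invert_apply]
    have := hFneg (-k)
    rw [neg_neg] at this
    rw [this]
    ring
  · subst hk
    rw [if_neg (by omega), if_neg (by omega), hF0, add_zero]
  · rw [if_pos (by omega), if_neg (by omega), invert_apply, neg_neg, zero_add]

private theorem kl_uniq (hfin : ∀ m : α, {s | s ≤ m}.Finite)
    (u : α → α → LaurentPolynomial ℤ) (hu1 : ∀ m, u m m = 1)
    (Z Y : α → α → LaurentPolynomial ℤ)
    (hZ1 : ∀ m, Z m m = 1) (hZ2 : ∀ m n, n < m → ∀ k : ℤ, 0 ≤ k → (Z m n).coeff k = 0)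
    (hZ3 : ∀ m n, ¬ n ≤ m → Z m n = 0)
    (hZ4 : ∀ m n, invert (Z m n)
      = ∑ s ∈ (hfin m).toFinset.filter (fun s => n ≤ s), u m s * Z s n)
    (hY1 : ∀ m, Y m m = 1) (hY2 : ∀ m n, n < m → ∀ k : ℤ, 0 ≤ k → (Y m n).coeff k = 0)
    (hY3 : ∀ m n, ¬ n ≤ m → Y m n = 0)
    (hY4 : ∀ m n, invert (Y m n)
      = ∑ s ∈ (hfin m).toFinset.filter (fun s => n ≤ s), u m s * Y s n) :
    Z = Y := by
  suffices h : ∀ n m, Z m n = Y m n by funext m n; exact h n m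
  intro n m
  refine (kl_wf hfin).induction (C := fun m => Z m n = Y m n) m ?_
  clear m
  intro m IH
  by_cases hnm : n ≤ m
  swap
  · rw [hZ3 _ _ hnm, hY3 _ _ hnm]
  by_cases hmn : m = n
  · subst hmn
    rw [hZ1, hY1]
  have hlt : n < m := lt_of_le_of_ne hnm (Ne.symm hmn)
  set T : Finset α := (hfin m).toFinset.filter (fun s => n ≤ s) with hTdef
  have hmT : m ∈ T := by
    simp only [hTdef, Finset.mem_filter, Set.Finite.mem_toFinset, Set.mem_setOf_eq]
    exact ⟨le_rfl, hnm⟩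
  set D : LaurentPolynomial ℤ := Z m n - Y m n with hDdef
  have hD4 : invert D = D := by
    rw [hDdef, map_sub, hZ4, hY4, ← Finset.sum_sub_distrib]
    have hz : ∀ s ∈ T.erase m, u m s * Z s n - u m s * Y s n = 0 := by
      intro s hs
      have hsle : s ≤ m := by
        have := Finset.mem_of_mem_erase hs
        simp only [hTdef, Finset.mem_filter, Set.Finite.mem_toFinset, Set.mem_setOf_eq] at this
        exact this.1
      have hslt : s < m := lt_of_le_of_ne hsle (Finset.ne_of_mem_erase hs)
      rw [IH s hslt, sub_self]
    rw [← hTdef, ← Finset.add_sum_erase T _ hmT, Finset.sum_eq_zero hz, add_zero, hu1,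
      one_mul, one_mul]
  have hDk : ∀ k : ℤ, 0 ≤ k → D.coeff k = 0 := by
    intro k hk
    have h : D.coeff k = (Z m n).coeff k - (Y m n).coeff k := by rw [hDdef, kl_coeff_sub]
    rw [h, hZ2 m n hlt k hk, hY2 m n hlt k hk, sub_self]
  have hD0 : D = 0 := by
    ext k
    rw [kl_coeff_zero]
    rcases le_or_gt 0 k with hk | hk
    · exact hDk k hk
    · have h : (invert D).coeff k = D.coeff k := by rw [hD4]
      rw [invert_apply] at h
      rw [← h]
      exact hDk (-k) (by omega)
  have := hDdef.symm.trans hD0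
  exact sub_eq_zero.mp this

end KLaux

/-- abstract Kazhdan–Lusztig-type lemma.  Given a unitriangular matrix
`(u_{mn}(t))` over `ℤ[t,t⁻¹]`, indexed by a poset in which every element has only finitely
many elements below it, satisfying the involutivity condition
`Σ_{s : n ≤ s ≤ m} u_{ms}(t⁻¹) u_{sn}(t) = δ_{mn}`, there is a unique matrix `(Z_{mn}(t))`
with `Z_{mm} = 1`, `Z_{mn} ∈ t⁻¹ℤ[t⁻¹]` for `n < m`, `Z_{mn} = 0` unless `n ≤ m`, and
`Z_{mn}(t⁻¹) = Σ_{s : n ≤ s ≤ m} u_{ms}(t) Z_{sn}(t)`. -/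
theorem kl_existence_uniqueness {α : Type} [PartialOrder α]
    (hfin : ∀ m : α, {s | s ≤ m}.Finite)
    (u : α → α → LaurentPolynomial ℤ)
    (hu1 : ∀ m, u m m = 1)
    (hu0 : ∀ m n, ¬ n ≤ m → u m n = 0)
    (hinv : ∀ m n : α,
      ∑ s ∈ (hfin m).toFinset.filter (fun s => n ≤ s), invert (u m s) * u s n
        = if m = n then 1 else 0) :
    ∃! Z : α → α → LaurentPolynomial ℤ,
      (∀ m, Z m m = 1) ∧
      (∀ m n, n < m → ∀ k : ℤ, 0 ≤ k → (Z m n).coeff k = 0) ∧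
      (∀ m n, ¬ n ≤ m → Z m n = 0) ∧
      (∀ m n, invert (Z m n)
        = ∑ s ∈ (hfin m).toFinset.filter (fun s => n ≤ s), u m s * Z s n) := by
  refine ⟨fun m n => klZ hfin u n m,
    ⟨fun m => klZ_self hfin u m,
     fun m n h k hk => klZ_negdeg hfin u (ne_of_gt h) k hk,
     fun m n h => klZ_zero hfin u h,
     fun m n => klZ_main hfin u hu1 hu0 hinv n m⟩, ?_⟩
  intro Y hY
  exact kl_uniq hfin u hu1 Y (fun m n => klZ hfin u n m)
    hY.1 hY.2.1 hY.2.2.1 hY.2.2.2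
    (fun m => klZ_self hfin u m)
    (fun m n h k hk => klZ_negdeg hfin u (ne_of_gt h) k hk)
    (fun m n h => klZ_zero hfin u h)
    (fun m n => klZ_main hfin u hu1 hu0 hinv n m)
end

section
/- With notation as in the Kazhdan–Lusztig-type lemma, suppose Z_{sn} are already determined for all s with n ≤ s < m. Set F_{mn}(t) = Σ_{s: n ≤ s < m} u_{ms}(t) Z_{sn}(t). Then F_{mn}(t^{-1}) = −F_{mn}(t); consequently there is a unique Z_{mn}(t) ∈ t^{-1}ℤ[t^{-1}] with Z_{mn}(t^{-1}) − Z_{mn}(t) = F_{mn}(t). -/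
open scoped BigOperators Classical
open LaurentPolynomial

/-- in the inductive step of the Kazhdan–Lusztig-type lemma, if the
`Z_{sn}` are already determined for `n ≤ s < m` and
`F_{mn}(t) = Σ_{s : n ≤ s < m} u_{ms}(t) Z_{sn}(t)`, then `F_{mn}(t⁻¹) = −F_{mn}(t)`;
consequently there is a unique `Z_{mn}(t) ∈ t⁻¹ℤ[t⁻¹]` with
`Z_{mn}(t⁻¹) − Z_{mn}(t) = F_{mn}(t)`. -/
theorem kl_inductive_step {α : Type} [PartialOrder α]
    (hfin : ∀ m : α, {s | s ≤ m}.Finite)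
    (u : α → α → LaurentPolynomial ℤ)
    (hu1 : ∀ m, u m m = 1)
    (hu0 : ∀ m n, ¬ n ≤ m → u m n = 0)
    (hinv : ∀ (m t' : α), t' < m →
      ∑ s ∈ (hfin m).toFinset.filter (fun s => t' ≤ s), invert (u m s) * u s t' = 0)
    (m n : α) (hnm : n < m)
    (Z : α → α → LaurentPolynomial ℤ)
    (hZ1 : ∀ s, Z s s = 1)
    (hZneg : ∀ s, n < s → s < m → ∀ k : ℤ, 0 ≤ k → (Z s n).coeff k = 0)
    (hZ0 : ∀ s, ¬ n ≤ s → Z s n = 0)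
    (hZrec : ∀ s, n ≤ s → s < m →
      invert (Z s n) = ∑ r ∈ (hfin s).toFinset.filter (fun r => n ≤ r), u s r * Z r n) :
    (invert (∑ s ∈ (hfin m).toFinset.filter (fun s => n ≤ s ∧ s < m), u m s * Z s n)
        = -(∑ s ∈ (hfin m).toFinset.filter (fun s => n ≤ s ∧ s < m), u m s * Z s n)) ∧
    (∃! P : LaurentPolynomial ℤ, (∀ k : ℤ, 0 ≤ k → P.coeff k = 0) ∧
      invert P - P = ∑ s ∈ (hfin m).toFinset.filter (fun s => n ≤ s ∧ s < m), u m s * Z s n) := by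
  set S : Finset α := (hfin m).toFinset.filter (fun s => n ≤ s ∧ s < m) with hSdef
  set R' : Finset α := (hfin m).toFinset.filter (fun r => n ≤ r) with hRdef
  have hmemS : ∀ s, s ∈ S ↔ (s ≤ m ∧ (n ≤ s ∧ s < m)) := by
    intro s; simp [hSdef, Set.Finite.mem_toFinset]
  have hmemR : ∀ r, r ∈ R' ↔ (r ≤ m ∧ n ≤ r) := by
    intro r; simp [hRdef, Set.Finite.mem_toFinset]
  set F : LaurentPolynomial ℤ := ∑ s ∈ S, u m s * Z s n with hFdef
  -- Step A: rewrite `invert F` as a double sum over `S ×ˢ R'`.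
  have stepA : invert F = ∑ s ∈ S, ∑ r ∈ R', invert (u m s) * (u s r * Z r n) := by
    rw [hFdef, map_sum]
    refine Finset.sum_congr rfl ?_
    intro s hs
    obtain ⟨hsm, hns, hsltm⟩ := (hmemS s).1 hs
    rw [map_mul, hZrec s hns hsltm, Finset.mul_sum]
    refine Finset.sum_subset ?_ ?_
    · intro r hr
      rw [Finset.mem_filter, Set.Finite.mem_toFinset] at hr
      exact (hmemR r).2 ⟨le_trans hr.1 hsm, hr.2⟩
    · intro r hrR hrnot
      rw [Finset.mem_filter, Set.Finite.mem_toFinset] at hrnot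
      push_neg at hrnot
      by_cases hrs : r ≤ s
      · exact absurd ((hmemR r).1 hrR).2 (hrnot hrs)
      · rw [hu0 s r hrs, zero_mul, mul_zero]
  -- swap the order of summation and factor out `Z r n`
  have stepB : invert F = ∑ r ∈ R', (∑ s ∈ S, invert (u m s) * u s r) * Z r n := by
    rw [stepA, Finset.sum_comm]
    refine Finset.sum_congr rfl ?_
    intro r _
    rw [Finset.sum_mul]
    exact Finset.sum_congr rfl fun s _ => (mul_assoc _ _ _).symm
  -- key computation of the inner coefficient
  have key : ∀ r ∈ S, (∑ s ∈ S, invert (u m s) * u s r) = -(u m r) := by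
    intro r hr
    obtain ⟨hrm, hnr, hrltm⟩ := (hmemS r).1 hr
    have h0 := hinv m r hrltm
    set T : Finset α := (hfin m).toFinset.filter (fun s => r ≤ s) with hTdef
    have hmT : m ∈ T := by
      rw [hTdef, Finset.mem_filter, Set.Finite.mem_toFinset]
      exact ⟨le_refl m, le_of_lt hrltm⟩
    have hsplit : ∑ s ∈ T, invert (u m s) * u s r
        = invert (u m m) * u m r + ∑ s ∈ T.erase m, invert (u m s) * u s r :=
      (Finset.add_sum_erase T _ hmT).symm
    have herase : ∑ s ∈ T.erase m, invert (u m s) * u s r = -(u m r) := by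
      have := hsplit ▸ h0
      rw [hu1 m, map_one, one_mul] at this
      exact eq_neg_of_add_eq_zero_right this
    have hsum : ∑ s ∈ S, invert (u m s) * u s r = ∑ s ∈ T.erase m, invert (u m s) * u s r := by
      refine (Finset.sum_subset ?_ ?_).symm
      · intro s hs
        rw [Finset.mem_erase, hTdef, Finset.mem_filter, Set.Finite.mem_toFinset] at hs
        exact (hmemS s).2 ⟨hs.2.1, le_trans hnr hs.2.2, lt_of_le_of_ne hs.2.1 hs.1⟩
      · intro s hsS hsnot
        obtain ⟨hsm, hns, hsltm⟩ := (hmemS s).1 hsS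
        have hrs : ¬ r ≤ s := by
          intro hrs
          refine hsnot (Finset.mem_erase.2 ⟨ne_of_lt hsltm, ?_⟩)
          rw [hTdef, Finset.mem_filter, Set.Finite.mem_toFinset]
          exact ⟨hsm, hrs⟩
        rw [hu0 s r hrs, mul_zero]
    rw [hsum, herase]
  have hSR : S ⊆ R' := by
    intro s hs
    exact (hmemR s).2 ⟨((hmemS s).1 hs).1, ((hmemS s).1 hs).2.1⟩
  -- part 1
  have part1 : invert F = -F := by
    have h1 : ∑ r ∈ R', (∑ s ∈ S, invert (u m s) * u s r) * Z r n
        = ∑ r ∈ S, (∑ s ∈ S, invert (u m s) * u s r) * Z r n := by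
      refine (Finset.sum_subset hSR ?_).symm
      intro r hrR hrnot
      have hrm : r = m := by
        obtain ⟨hrle, hnr⟩ := (hmemR r).1 hrR
        by_contra hne
        exact hrnot ((hmemS r).2 ⟨hrle, hnr, lt_of_le_of_ne hrle hne⟩)
      have hc : (∑ s ∈ S, invert (u m s) * u s r) = 0 := by
        refine Finset.sum_eq_zero ?_
        intro s hs
        have hms : ¬ r ≤ s := by
          rw [hrm]; exact not_le_of_gt ((hmemS s).1 hs).2.2
        rw [hu0 s r hms, mul_zero]
      rw [hc, zero_mul]
    rw [stepB, h1, hFdef, ← Finset.sum_neg_distrib]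
    refine Finset.sum_congr rfl fun r hr => ?_
    rw [key r hr, neg_mul]
  refine ⟨part1, ?_⟩
  -- coefficient facts about F
  have hF0 : ∀ k : ℤ, F.coeff (-k) = -(F.coeff k) := by
    intro k
    have h := congrArg (fun G : LaurentPolynomial ℤ => G.coeff k) part1
    rw [invert_apply] at h
    rw [h]
    exact (Finsupp.neg_apply F.coeff k)
  have hF00 : F.coeff 0 = 0 := by
    have h := hF0 0
    rw [neg_zero] at h
    omega
  set P : LaurentPolynomial ℤ := -(AddMonoidAlgebra.ofCoeff (Finsupp.filter (fun k => k < 0) F.coeff)) with hPdef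
  have hPapp : ∀ k : ℤ, P.coeff k = if k < 0 then -(F.coeff k) else 0 := by
    intro k
    rw [hPdef,
      show ((-(AddMonoidAlgebra.ofCoeff (Finsupp.filter (fun k => k < 0) F.coeff)) : LaurentPolynomial ℤ).coeff k)
        = -((Finsupp.filter (fun k => k < 0) F.coeff) k) from rfl,
      Finsupp.filter_apply]
    split <;> simp
  have hsubapp : ∀ (Q : LaurentPolynomial ℤ) (k : ℤ), (invert Q - Q).coeff k = Q.coeff (-k) - Q.coeff k := by
    intro Q k
    rw [show ((invert Q - Q).coeff k) = (invert Q).coeff k - Q.coeff k from rfl, invert_apply]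
  refine ⟨P, ⟨?_, ?_⟩, ?_⟩
  · intro k hk
    rw [hPapp, if_neg (not_lt.2 hk)]
  · refine LaurentPolynomial.ext fun k => ?_
    rw [hsubapp P k, hPapp, hPapp]
    rcases lt_trichotomy k 0 with h | h | h
    · rw [if_neg (by omega : ¬ (-k < 0)), if_pos h]
      ring
    · subst h
      simpa using hF00.symm
    · rw [if_pos (by omega : (-k : ℤ) < 0), if_neg (by omega : ¬ k < 0), hF0, neg_neg, sub_zero]
  · rintro Q ⟨hQ1, hQ2⟩
    refine LaurentPolynomial.ext fun k => ?_
    by_cases hk : 0 ≤ k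
    · rw [hQ1 k hk, hPapp, if_neg (not_lt.2 hk)]
    · push_neg at hk
      have h2 : Q.coeff k - Q.coeff (-k) = F.coeff (-k) := by
        have h := congrArg (fun G : LaurentPolynomial ℤ => G.coeff (-k)) hQ2
        rw [hsubapp Q (-k), neg_neg] at h
        exact h
      rw [hQ1 (-k) (by omega)] at h2
      rw [hPapp, if_pos hk, ← hF0 k]
      omega
end

section
/- Let K̂_{t,i} be the ℤ[t,t^{-1}]-span of the elements E_i(m) = m · ∏_a Σ_{r_a=0}^{u_{i,a}(m)} t^{r_a(u_{i,a}(m)−r_a)} [u_{i,a}(m) choose r_a]_t V_{i,aε}^{r_a}, where m runs over i-dominant monomials (u_{i,a}(m) ≥ 0 for all a). Let f = m'(1+V_{i,bε}) with m' a monomial satisfying u_{i,b}(m') = 1 and u_{i,c}(m') = 0 for c ≠ b, and let g = E_i(m). Then, writing n = u_{i,bε^{-2}}(m), one has t^{−2d(m',m)} f ∗ g − E_i(m m') = (t^{2n} − 1) E_i(m m' V_{i,bε^{-1}}) if n > 0, and f ∗ g = t^{2d(m',m)} E_i(m m') if n = 0. In particular f ∗ g ∈ K̂_{t,i}. -/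
open scoped BigOperators

/-- A monomial in the commuting variables `V_{i,a}`, `W_{i,a}` (`i ∈ I`, `a ∈ ℂ*`),
recorded by its finitely supported exponent functions. -/
@[ext] structure Mon (I : Type) where
  v : I × ℂ →₀ ℕ
  w : I × ℂ →₀ ℕ

/-- Product of monomials: exponents add. -/
noncomputable def Mon.mul {I : Type} (m₁ m₂ : Mon I) : Mon I := ⟨m₁.v + m₂.v, m₁.w + m₂.w⟩

/-- `u_{i,a}(m) = w_{i,a}(m) − v_{i,aε⁻¹}(m) − v_{i,aε}(m) + Σ_{j : a_{ij} = −1} v_{j,a}(m)`. -/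
noncomputable def uq {I : Type} [Fintype I] (A : I → I → ℤ) (ε : ℂ) (m : Mon I) (i : I) (a : ℂ) : ℤ :=
  (m.w (i, a) : ℤ) - (m.v (i, a * ε⁻¹) : ℤ) - (m.v (i, a * ε) : ℤ)
    + ∑ j : I, if A i j = -1 then (m.v (j, a) : ℤ) else 0

/-- `d(m¹,m²) = Σ_{i,a} ( v_{i,aε}(m¹) u_{i,a}(m²) + w_{i,aε}(m¹) v_{i,a}(m²) )`. -/
noncomputable def dd {I : Type} [Fintype I] (A : I → I → ℤ) (ε : ℂ) (m₁ m₂ : Mon I) : ℤ :=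
  ∑ᶠ p : I × ℂ, ((m₁.v (p.1, p.2 * ε) : ℤ) * uq A ε m₂ p.1 p.2
    + (m₁.w (p.1, p.2 * ε) : ℤ) * (m₂.v p : ℤ))
noncomputable instance {I : Type} : Mul (Mon I) := ⟨fun m₁ m₂ => ⟨m₁.v + m₂.v, m₁.w + m₂.w⟩⟩
instance {I : Type} : One (Mon I) := ⟨⟨0, 0⟩⟩

@[simp] lemma Mon.mul_v {I : Type} (m₁ m₂ : Mon I) : (m₁ * m₂).v = m₁.v + m₂.v := rfl
@[simp] lemma Mon.mul_w {I : Type} (m₁ m₂ : Mon I) : (m₁ * m₂).w = m₁.w + m₂.w := rfl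
@[simp] lemma Mon.one_v {I : Type} : (1 : Mon I).v = 0 := rfl
@[simp] lemma Mon.one_w {I : Type} : (1 : Mon I).w = 0 := rfl

noncomputable instance {I : Type} : CommMonoid (Mon I) where
  mul_assoc a b c := by ext : 1 <;> simp [add_assoc]
  one_mul a := by ext : 1 <;> simp
  mul_one a := by ext : 1 <;> simp
  mul_comm a b := by ext : 1 <;> simp [add_comm]

/-- The ring `ℤ[t,t⁻¹,V_{i,a},W_{i,a}]`, realized as the monoid algebra of `ℤ` over the
commutative monoid of pairs (power of `t`, monomial in the `V`, `W` variables). -/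
abbrev FRing (I : Type) := MonoidAlgebra ℤ (Multiplicative ℤ × Mon I)

/-- The basis element `t^k · m` of `ℤ[t,t⁻¹,V_{i,a},W_{i,a}]`. -/
noncomputable def mono {I : Type} (k : ℤ) (m : Mon I) : FRing I :=
  MonoidAlgebra.single (Multiplicative.ofAdd k, m) 1

/-- The twisted multiplication `m¹ ∗ m² = t^{2D(m¹,m²)} m¹ m²`, extended
`ℤ[t,t⁻¹]`-bilinearly, for a given function `D` on pairs of monomials. -/
noncomputable def starD {I : Type} (D : Mon I → Mon I → ℤ) (f g : FRing I) : FRing I :=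
  f.coeff.sum fun p c => g.coeff.sum fun q c' =>
    MonoidAlgebra.single (p.1 * q.1 * Multiplicative.ofAdd (2 * D p.2 q.2), p.2 * q.2) (c * c')
open LaurentPolynomial

/-- The balanced quantum integer `[k]_t = (t^k − t^{−k})/(t − t^{−1}) ∈ ℤ[t,t⁻¹]`,
written out as `t^{k-1} + t^{k-3} + ⋯ + t^{1-k}`. -/
noncomputable def qint (k : ℕ) : LaurentPolynomial ℤ :=
  ∑ j ∈ Finset.range k, T ((k : ℤ) - 1 - 2 * j)

/-- The balanced quantum factorial `[n]_t! = [n]_t [n-1]_t ⋯ [1]_t`. -/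
noncomputable def qfact : ℕ → LaurentPolynomial ℤ
  | 0 => 1
  | n + 1 => qfact n * qint (n + 1)

/-- The single-variable monomial `V_{i,c}`. -/
noncomputable def Vmon {I : Type} (i : I) (c : ℂ) : Mon I := ⟨Finsupp.single (i, c) 1, 0⟩

/-- The embedding of `ℤ[t,t⁻¹]` into `ℤ[t,t⁻¹,V_{i,a},W_{i,a}]`. -/
noncomputable def emb {I : Type} (P : LaurentPolynomial ℤ) : FRing I :=
  P.coeff.sum fun k c => MonoidAlgebra.single (Multiplicative.ofAdd k, (1 : Mon I)) c

/-- The `n`-fold twisted power `f^{∗n}` (with `f^{∗0} = 1`). -/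
noncomputable def starPow {I : Type} (D : Mon I → Mon I → ℤ) (f : FRing I) : ℕ → FRing I
  | 0 => 1
  | n + 1 => starD D f (starPow D f n)
/-- The element `E_i(m)` of `ℤ[t,t⁻¹,V_{i,a},W_{i,a}]`:
`E_i(m) = m ∏_a Σ_{r_a=0}^{u_{i,a}(m)} t^{r_a(u_{i,a}(m)−r_a)} [u_{i,a}(m) choose r_a]_t V_{i,aε}^{r_a}`,
where `S` is any finite set outside which `u_{i,a}(m) = 0` and `B` is the family of
balanced `t`-binomial coefficients. -/
noncomputable def Ei {I : Type} [Fintype I] (A : I → I → ℤ) (ε : ℂ)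
    (B : ℕ → ℕ → LaurentPolynomial ℤ) (i : I) (m : Mon I) (S : Finset ℂ) : FRing I :=
  mono 0 m * ∏ a ∈ S,
    ∑ r ∈ Finset.range ((uq A ε m i a).toNat + 1),
      emb (T ((r : ℤ) * (uq A ε m i a - (r : ℤ))) * B (uq A ε m i a).toNat r)
        * mono 0 (Vmon i (a * ε) ^ r)

/-- The `ℤ[t,t⁻¹]`-span `K̂_{t,i}` of the elements `E_i(m)`, `m` `i`-dominant. -/
noncomputable def Khat {I : Type} [Fintype I] (A : I → I → ℤ) (ε : ℂ)
    (B : ℕ → ℕ → LaurentPolynomial ℤ) (i : I) : Submodule ℤ (FRing I) :=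
  Submodule.span ℤ {x | ∃ (k : ℤ) (m : Mon I) (S : Finset ℂ),
    (∀ a : ℂ, 0 ≤ uq A ε m i a) ∧ (∀ a : ℂ, a ∉ S → uq A ε m i a = 0) ∧
    x = emb (T k) * Ei A ε B i m S}

section LaurentLemmas
open LaurentPolynomial Finset

lemma qint_one : qint 1 = 1 := by simp [qint]

lemma qint_succ_left (k : ℕ) : qint (k+1) = T (-1) * qint k + T (k:ℤ) := by
  rw [qint, Finset.sum_range_succ', qint, Finset.mul_sum]
  congr 1
  · exact Finset.sum_congr rfl fun j _ => by rw [← T_add]; congr 1; push_cast; ring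
  · congr 1; push_cast; ring

lemma qint_succ_right (k : ℕ) : qint (k+1) = T 1 * qint k + T (-(k:ℤ)) := by
  rw [qint, Finset.sum_range_succ, qint, Finset.mul_sum]
  congr 1
  · exact Finset.sum_congr rfl fun j _ => by rw [← T_add]; congr 1; push_cast; ring
  · congr 1; push_cast; ring

lemma tsub_mul_qint (k : ℕ) : (T 1 - T (-1)) * qint k = T (k:ℤ) - T (-(k:ℤ)) := by
  have h1 := qint_succ_left k
  have h2 := qint_succ_right k
  have : T 1 * qint k + T (-(k:ℤ)) = T (-1) * qint k + T (k:ℤ) := by rw [← h1, ← h2]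
  linear_combination this

lemma T_two_mul_sub_one (k : ℕ) : T (2*(k:ℤ)) - 1 = T (k:ℤ) * ((T 1 - T (-1)) * qint k) := by
  rw [tsub_mul_qint, mul_sub, ← T_add, ← T_add, ← two_mul, add_neg_cancel, T_zero]

lemma qint_split (k r : ℕ) (h : r ≤ k) :
    T ((r:ℤ)) * qint k = T ((k:ℤ)) * qint r + qint (k - r) := by
  rw [qint, Finset.mul_sum, Finset.range_eq_Ico,
    ← Finset.sum_Ico_consecutive _ (Nat.zero_le r) h, ← Finset.range_eq_Ico]
  congr 1
  · rw [qint, Finset.mul_sum]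
    exact Finset.sum_congr rfl fun j _ => by rw [← T_add, ← T_add]; congr 1; push_cast; ring
  · rw [Finset.sum_Ico_eq_sum_range, qint]
    apply Finset.sum_congr rfl
    intro j hj
    simp only [Finset.mem_range] at hj
    rw [← T_add]
    congr 1
    have : ((k - r : ℕ) : ℤ) = (k:ℤ) - r := by
      rw [Nat.cast_sub h]
    rw [this]; push_cast; ring

noncomputable def evone : LaurentPolynomial ℤ →+* ℤ :=
  AddMonoidAlgebra.liftNCRingHom (RingHom.id ℤ) (1 : Multiplicative ℤ →* ℤ) (fun x y => Commute.one_right _)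

@[simp] lemma evone_T (k : ℤ) : evone (T k) = 1 := by
  rw [evone, T, AddMonoidAlgebra.liftNCRingHom]
  erw [AddMonoidAlgebra.liftNC_single]
  simp

lemma evone_qint (k : ℕ) : evone (qint k) = k := by
  rw [qint, map_sum]
  simp

lemma qint_ne_zero {k : ℕ} (hk : 0 < k) : qint k ≠ 0 := by
  intro h
  have := evone_qint k
  rw [h, map_zero] at this
  omega

lemma qfact_ne_zero (k : ℕ) : qfact k ≠ 0 := by
  induction k with
  | zero => simp [qfact]
  | succ k ih =>
    rw [qfact]
    exact mul_ne_zero ih (qint_ne_zero k.succ_pos)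

end LaurentLemmas
section Blemmas
open LaurentPolynomial Finset

lemma qint_pascal (u r : ℕ) (h : r ≤ u) :
    T ((r:ℤ)*((u:ℤ)-r)) * qint (u + 1 - r) + T (((r:ℤ)+1)*((u:ℤ)+1-r)) * qint r
      = T ((r:ℤ)*((u:ℤ)+1-r)) * qint (u+1) := by
  have key := qint_split (u+1) r (h.trans u.le_succ)
  have e1 : (((r:ℤ))+1)*((u:ℤ)+1-r) = (r:ℤ)*((u:ℤ)-r) + ((u:ℤ)+1) := by ring
  have e2 : (r:ℤ)*((u:ℤ)+1-r) = (r:ℤ)*((u:ℤ)-r) + r := by ring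
  have e3 : (((u+1:ℕ)):ℤ) = (u:ℤ)+1 := by push_cast; ring
  rw [e3] at key
  have t1 : (T ((r:ℤ)*((u:ℤ)-r) + ((u:ℤ)+1)) : LaurentPolynomial ℤ) = T ((r:ℤ)*((u:ℤ)-r)) * T ((u:ℤ)+1) := T_add _ _
  have t2 : (T ((r:ℤ)*((u:ℤ)-r) + (r:ℤ)) : LaurentPolynomial ℤ) = T ((r:ℤ)*((u:ℤ)-r)) * T (r:ℤ) := T_add _ _
  rw [e1, e2, t1, t2]
  linear_combination (-(T ((r:ℤ)*((u:ℤ)-r)))) * key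

variable (B : ℕ → ℕ → LaurentPolynomial ℤ)
  (hB : ∀ N r : ℕ, r ≤ N → qfact r * qfact (N - r) * B N r = qfact N)

include hB

lemma B_zero (N : ℕ) : B N 0 = 1 := by
  have h := hB N 0 (Nat.zero_le N)
  rw [show qfact 0 = 1 from rfl, one_mul, Nat.sub_zero] at h
  exact mul_left_cancel₀ (qfact_ne_zero N) (by rw [h, mul_one])

lemma B_diag (N : ℕ) : B N N = 1 := by
  have h := hB N N le_rfl
  rw [Nat.sub_self, show qfact 0 = 1 from rfl, mul_one] at h
  exact mul_left_cancel₀ (qfact_ne_zero N) (by rw [h, mul_one])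

lemma B_pascal (u r : ℕ) (hr : r ≤ u + 1) :
    (if r ≤ u then T ((r:ℤ)*((u:ℤ)-r)) * B u r else 0)
     + (if 1 ≤ r then T (((r:ℤ)+1)*((u:ℤ)+1-r)) * B u (r-1) else 0)
    = T ((r:ℤ)*((u:ℤ)+1-r)) * B (u+1) r := by
  rcases Nat.eq_zero_or_pos r with h0 | h1
  · subst h0
    rw [if_pos (Nat.zero_le u), if_neg (by omega : ¬ (1:ℕ) ≤ 0), B_zero B hB, B_zero B hB]
    push_cast
    norm_num
  · rcases eq_or_lt_of_le hr with he | hlt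
    · subst he
      rw [if_neg (by omega : ¬ u + 1 ≤ u), if_pos (by omega : 1 ≤ u + 1), Nat.add_sub_cancel,
        B_diag B hB, B_diag B hB]
      have : (((u+1:ℕ):ℤ)+1)*((u:ℤ)+1-((u+1:ℕ):ℤ)) = 0 := by push_cast; ring
      rw [this]
      have : (((u+1:ℕ):ℤ))*((u:ℤ)+1-((u+1:ℕ):ℤ)) = 0 := by push_cast; ring
      rw [this, zero_add]
    · have hru : r ≤ u := by omega
      rw [if_pos hru, if_pos (by omega : 1 ≤ r)]
      obtain ⟨s, rfl⟩ : ∃ s, r = s + 1 := ⟨r-1, by omega⟩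
      obtain ⟨k, rfl⟩ : ∃ k, u = s + 1 + k := ⟨u - (s+1), by omega⟩
      apply mul_left_cancel₀
        (mul_ne_zero (qfact_ne_zero (s+1)) (qfact_ne_zero (k+1)))
      have hB1 := hB (s+1+k) (s+1) (by omega)
      rw [show s+1+k-(s+1) = k from by omega] at hB1
      have hB2 := hB (s+1+k) s (by omega)
      rw [show s+1+k-s = k+1 from by omega] at hB2
      have hB3 := hB (s+1+k+1) (s+1) (by omega)
      rw [show s+1+k+1-(s+1) = k+1 from by omega] at hB3
      have qp := qint_pascal (s+1+k) (s+1) hru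
      rw [show s+1+k+1-(s+1) = k+1 from by omega] at qp
      rw [show qfact (k+1) = qfact k * qint (k+1) from rfl] at *
      rw [show qfact (s+1) = qfact s * qint (s+1) from rfl] at *
      rw [show qfact (s+1+k+1) = qfact (s+1+k) * qint (s+1+k+1) from rfl] at *
      rw [Nat.add_sub_cancel]
      linear_combination (T ((((s+1:ℕ)):ℤ)*((((s+1+k:ℕ)):ℤ)-((s+1:ℕ):ℤ))) * qint (k+1)) * hB1
        + (T (((((s+1:ℕ)):ℤ)+1)*((((s+1+k:ℕ)):ℤ)+1-((s+1:ℕ):ℤ))) * qint (s+1)) * hB2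
        - (T ((((s+1:ℕ)):ℤ)*((((s+1+k:ℕ)):ℤ)+1-((s+1:ℕ):ℤ)))) * hB3
        + qfact (s+1+k) * qp

lemma B_II (n r : ℕ) (h1 : 1 ≤ r) (h2 : r ≤ n) :
    T ((r:ℤ)*((n:ℤ)-r) + 2*(r:ℤ)) * B n r
      = T ((r:ℤ)*((n:ℤ)-r)) * B n r
        + (T (2*(n:ℤ)) - 1) * (T (((r:ℤ)-1)*((n:ℤ)-r)) * B (n-1) (r-1)) := by
  obtain ⟨s, rfl⟩ : ∃ s, r = s + 1 := ⟨r-1, by omega⟩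
  obtain ⟨k, rfl⟩ : ∃ k, n = s + 1 + k := ⟨n-(s+1), by omega⟩
  rw [Nat.add_sub_cancel, show s+1+k-1 = s+k from by omega]
  apply mul_left_cancel₀ (mul_ne_zero (qfact_ne_zero (s+1)) (qfact_ne_zero k))
  have hBn := hB (s+1+k) (s+1) h2
  rw [show s+1+k-(s+1) = k from by omega] at hBn
  have hBn1 := hB (s+k) s (by omega)
  rw [show s+k-s = k from by omega] at hBn1
  have hq2 : qfact (s+1+k) = qfact (s+k) * qint (s+1+k) := by
    rw [show s+1+k = (s+k)+1 from by omega]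
    rfl
  rw [hq2] at hBn
  rw [show qfact (s+1) = qfact s * qint (s+1) from rfl] at *
  have hTe : (T ((((s+1:ℕ)):ℤ)*((((s+1+k:ℕ)):ℤ)-((s+1:ℕ):ℤ)) + 2*((s+1:ℕ):ℤ)) : LaurentPolynomial ℤ)
      = T ((((s+1:ℕ)):ℤ)*((((s+1+k:ℕ)):ℤ)-((s+1:ℕ):ℤ))) * T (2*((s+1:ℕ):ℤ)) := by
    rw [← T_add]
  have hT2r := T_two_mul_sub_one (s+1)
  have hT2n := T_two_mul_sub_one (s+1+k)
  have h4 : (T ((((s+1:ℕ)):ℤ)*((((s+1+k:ℕ)):ℤ)-((s+1:ℕ):ℤ))) : LaurentPolynomial ℤ) * T ((s+1:ℕ):ℤ)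
      = T (((((s+1:ℕ)):ℤ)-1)*((((s+1+k:ℕ)):ℤ)-((s+1:ℕ):ℤ))) * T ((s+1+k:ℕ):ℤ) := by
    rw [← T_add, ← T_add]; congr 1; push_cast; ring
  linear_combination (qfact s * qint (s+1) * qfact k * B (s+1+k) (s+1)) * hTe
    + (T ((((s+1:ℕ)):ℤ)*((((s+1+k:ℕ)):ℤ)-((s+1:ℕ):ℤ))) * (T (2*((s+1:ℕ):ℤ)) - 1)) * hBn
    + (T ((((s+1:ℕ)):ℤ)*((((s+1+k:ℕ)):ℤ)-((s+1:ℕ):ℤ))) * qfact (s+k) * qint (s+1+k)) * hT2r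
    + ((T 1 - T (-1)) * qint (s+1) * qfact (s+k) * qint (s+1+k)) * h4
    - (T (((((s+1:ℕ)):ℤ)-1)*((((s+1+k:ℕ)):ℤ)-((s+1:ℕ):ℤ))) * qint (s+1) * qfact (s+k)) * hT2n
    - ((T (2*((s+1+k:ℕ):ℤ)) - 1) * T (((((s+1:ℕ)):ℤ)-1)*((((s+1+k:ℕ)):ℤ)-((s+1:ℕ):ℤ))) * qint (s+1)) * hBn1

end Blemmas
section FRingBasics
open LaurentPolynomial
variable {I : Type}

lemma mono_mul (k l : ℤ) (m m' : Mon I) : mono k m * mono l m' = mono (k+l) (m*m') := by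
  unfold mono
  rw [MonoidAlgebra.single_mul_single]
  rfl

@[simp] lemma mono_zero_one : mono 0 (1 : Mon I) = 1 := rfl

lemma emb_single (k : ℤ) (c : ℤ) :
    emb (I:=I) (AddMonoidAlgebra.single k c) = MonoidAlgebra.single (Multiplicative.ofAdd k, 1) c := by
  unfold emb
  exact MonoidAlgebra.sum_single_index (by simp)

lemma emb_T (k : ℤ) : emb (I:=I) (T k) = mono k 1 :=
  emb_single k 1

@[simp] lemma emb_zero : emb (I:=I) 0 = 0 := by
  unfold emb; rw [AddMonoidAlgebra.coeff_zero]; exact Finsupp.sum_zero_index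

lemma emb_add (P Q : LaurentPolynomial ℤ) : emb (I:=I) (P + Q) = emb P + emb Q := by
  unfold emb
  rw [AddMonoidAlgebra.coeff_add]
  exact Finsupp.sum_add_index' (by simp) (fun k b1 b2 => MonoidAlgebra.single_add _ _ _)

@[simp] lemma emb_one : emb (I:=I) 1 = 1 := by
  have : (1 : LaurentPolynomial ℤ) = AddMonoidAlgebra.single 0 1 := rfl
  rw [this, emb_single]
  rfl

lemma emb_sub (P Q : LaurentPolynomial ℤ) : emb (I:=I) (P - Q) = emb P - emb Q := by
  have h := emb_add (I:=I) (P - Q) Q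
  rw [sub_add_cancel] at h
  rw [h]; ring

lemma emb_mul (P Q : LaurentPolynomial ℤ) : emb (I:=I) (P * Q) = emb P * emb Q := by
  induction P using AddMonoidAlgebra.induction_linear with
  | zero => simp
  | add P1 P2 h1 h2 => rw [add_mul, emb_add, emb_add, h1, h2, add_mul]
  | single p cp =>
    induction Q using AddMonoidAlgebra.induction_linear with
    | zero => simp
    | add Q1 Q2 h1 h2 => rw [mul_add, emb_add, emb_add, h1, h2, mul_add]
    | single q cq =>
      rw [show (AddMonoidAlgebra.single p cp : LaurentPolynomial ℤ) * AddMonoidAlgebra.single q cq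
        = AddMonoidAlgebra.single (p + q) (cp * cq) from AddMonoidAlgebra.single_mul_single _ _ _ _,
        emb_single, emb_single, emb_single, MonoidAlgebra.single_mul_single]
      rfl

/-- The domain-twisting map. -/
noncomputable def twmap (d : Mon I → ℤ) : FRing I → FRing I :=
  MonoidAlgebra.mapDomain (fun q : Multiplicative ℤ × Mon I => (q.1 * Multiplicative.ofAdd (2 * d q.2), q.2))

lemma starD_single_left (D : Mon I → Mon I → ℤ) (p : Multiplicative ℤ × Mon I) (c : ℤ)
    (g : FRing I) :
    starD D (MonoidAlgebra.single p c) g = MonoidAlgebra.single p c * twmap (D p.2) g := by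
  unfold starD twmap
  rw [MonoidAlgebra.sum_single_index (by simp [Finsupp.sum])]
  conv_rhs => rw [← MonoidAlgebra.sum_coeff_single g]
  rw [MonoidAlgebra.mapDomain_sum, Finsupp.mul_sum]
  apply Finsupp.sum_congr
  intro q _
  rw [MonoidAlgebra.mapDomain_single, MonoidAlgebra.single_mul_single]
  congr 1
  exact Prod.ext (mul_assoc _ _ _) rfl

lemma starD_add_left (D : Mon I → Mon I → ℤ) (f f' g : FRing I) :
    starD D (f + f') g = starD D f g + starD D f' g := by
  unfold starD
  rw [MonoidAlgebra.coeff_add]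
  apply Finsupp.sum_add_index'
  · intro p; simp [Finsupp.sum]
  · intro p c1 c2
    rw [← Finsupp.sum_add]
    apply Finsupp.sum_congr
    intro q _
    rw [add_mul]
    exact MonoidAlgebra.single_add _ _ _

lemma twmap_mono (d : Mon I → ℤ) (k : ℤ) (m : Mon I) :
    twmap d (mono k m) = mono (k + 2 * d m) m := by
  unfold twmap mono
  rw [MonoidAlgebra.mapDomain_single]
  rfl

lemma twmap_add (d : Mon I → ℤ) (f g : FRing I) : twmap d (f + g) = twmap d f + twmap d g :=
  MonoidAlgebra.mapDomain_add _ _ _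

lemma twmap_sum (d : Mon I → ℤ) {α : Type*} (s : Finset α) (F : α → FRing I) :
    twmap d (∑ a ∈ s, F a) = ∑ a ∈ s, twmap d (F a) :=
  map_sum (⟨⟨twmap d, MonoidAlgebra.mapDomain_zero _⟩, twmap_add d⟩ : FRing I →+ FRing I) F s

lemma twmap_finsupp_sum (d : Mon I → ℤ) {α M : Type*} [Zero M] (P : α →₀ M)
    (h : α → M → FRing I) :
    twmap d (P.sum h) = P.sum fun a b => twmap d (h a b) :=
  map_finsuppSum (⟨⟨twmap d, MonoidAlgebra.mapDomain_zero _⟩, twmap_add d⟩ : FRing I →+ FRing I) P h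

lemma twmap_emb (d : Mon I → ℤ) (hd1 : d 1 = 0) (P : LaurentPolynomial ℤ) :
    twmap d (emb P) = emb P := by
  unfold emb
  rw [twmap_finsupp_sum]
  apply Finsupp.sum_congr
  intro k _
  unfold twmap
  rw [MonoidAlgebra.mapDomain_single]
  congr 1
  simp [hd1]

lemma d_one_of_add {d : Mon I → ℤ} (hd : ∀ a b : Mon I, d (a*b) = d a + d b) : d 1 = 0 := by
  have := hd 1 1
  rw [mul_one] at this
  omega

lemma twmap_mul (d : Mon I → ℤ) (hd : ∀ a b : Mon I, d (a*b) = d a + d b) (f g : FRing I) :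
    twmap d (f * g) = twmap d f * twmap d g := by
  have hd1 : d 1 = 0 := d_one_of_add hd
  let ψ : (Multiplicative ℤ × Mon I) →* (Multiplicative ℤ × Mon I) :=
    { toFun := fun q => (q.1 * Multiplicative.ofAdd (2 * d q.2), q.2)
      map_one' := by simp [hd1]
      map_mul' := fun a b => by
        simp only [Prod.fst_mul, Prod.snd_mul, Prod.mk_mul_mk, Prod.ext_iff]
        refine ⟨?_, trivial⟩
        rw [hd, mul_add, ofAdd_add]
        exact mul_mul_mul_comm _ _ _ _ }
  exact MonoidAlgebra.mapDomain_mul ψ f g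

lemma twmap_one (d : Mon I → ℤ) (hd1 : d 1 = 0) : twmap d (1 : FRing I) = 1 := by
  have h : (1 : FRing I) = mono 0 1 := rfl
  rw [h, twmap_mono, hd1]
  norm_num

lemma twmap_prod (d : Mon I → ℤ) (hd : ∀ a b : Mon I, d (a*b) = d a + d b)
    {α : Type*} (s : Finset α) (F : α → FRing I) :
    twmap d (∏ a ∈ s, F a) = ∏ a ∈ s, twmap d (F a) := by
  classical
  induction s using Finset.cons_induction with
  | empty => simpa using twmap_one d (d_one_of_add hd)
  | cons a s ha ih =>
    rw [Finset.prod_cons, Finset.prod_cons, twmap_mul d hd, ih]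

end FRingBasics
section UqDd
open LaurentPolynomial
open scoped Classical
variable {I : Type} [Fintype I] (A : I → I → ℤ) (ε : ℂ)

@[simp] lemma Vmon_v {i : I} {c : ℂ} : (Vmon i c).v = Finsupp.single (i,c) 1 := rfl
@[simp] lemma Vmon_w {i : I} {c : ℂ} : (Vmon i c).w = 0 := rfl

lemma uq_mul (m₁ m₂ : Mon I) (i : I) (a : ℂ) :
    uq A ε (m₁ * m₂) i a = uq A ε m₁ i a + uq A ε m₂ i a := by
  unfold uq
  simp only [Mon.mul_v, Mon.mul_w, Finsupp.add_apply]
  push_cast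
  have hs : ∑ j : I, (if A i j = -1 then ((m₁.v (j,a) : ℤ) + (m₂.v (j,a) : ℤ)) else 0)
      = (∑ j : I, if A i j = -1 then ((m₁.v (j,a) : ℤ)) else 0)
        + ∑ j : I, if A i j = -1 then ((m₂.v (j,a) : ℤ)) else 0 := by
    rw [← Finset.sum_add_distrib]
    apply Finset.sum_congr rfl
    intro j _
    split <;> simp
  rw [hs]
  ring

lemma uq_one (i : I) (a : ℂ) : uq A ε 1 i a = 0 := by
  simp [uq]

lemma uq_pow (m : Mon I) (r : ℕ) (i : I) (a : ℂ) :
    uq A ε (m ^ r) i a = r * uq A ε m i a := by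
  induction r with
  | zero => simpa using uq_one A ε i a
  | succ r ih =>
    rw [pow_succ, uq_mul, ih]
    push_cast
    ring

open scoped Classical in
lemma uq_Vmon (hdiag : ∀ i, A i i = 2) (i j : I) (c a : ℂ) :
    uq A ε (Vmon i c) j a =
      (if (i,c) = (j, a*ε⁻¹) then -1 else 0) + (if (i,c) = (j, a*ε) then -1 else 0)
        + (if A j i = -1 ∧ a = c then 1 else 0) := by
  classical
  unfold uq
  simp only [Vmon_v, Vmon_w, Finsupp.coe_zero, Pi.zero_apply, Nat.cast_zero]
  have hs : ∑ j' : I, (if A j j' = -1 then ((Finsupp.single ((i,c) : I × ℂ) (1:ℕ) (j', a) : ℕ) : ℤ) else 0)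
      = (if A j i = -1 ∧ a = c then 1 else 0) := by
    rw [Finset.sum_eq_single i]
    · rw [Finsupp.single_apply]
      by_cases h : A j i = -1
      · by_cases h2 : a = c
        · simp [h, h2]
        · have : ¬ ((i,c) = (i,a)) := by simp [Prod.ext_iff]; exact fun hh => h2 hh.symm
          simp [h, h2, this]
      · simp [h]
    · intro j' _ hne
      have : ¬ (((i,c) : I × ℂ) = (j', a)) := by
        intro hh
        exact hne (congrArg Prod.fst hh).symm
      rw [Finsupp.single_apply, if_neg this]
      simp
    · intro h; exact absurd (Finset.mem_univ i) h
  rw [hs, Finsupp.single_apply, Finsupp.single_apply]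
  split_ifs <;> norm_num

lemma dd_eq_sum (hε : ε ≠ 0) (m₁ m₂ : Mon I) (U : Finset (I × ℂ))
    (hU : ∀ q : I × ℂ, q ∈ m₁.v.support ∪ m₁.w.support → (q.1, q.2 * ε⁻¹) ∈ U) :
    dd A ε m₁ m₂ = ∑ p ∈ U,
      ((m₁.v (p.1, p.2 * ε) : ℤ) * uq A ε m₂ p.1 p.2 + (m₁.w (p.1, p.2 * ε) : ℤ) * (m₂.v p : ℤ)) := by
  unfold dd
  apply finsum_eq_finset_sum_of_support_subset
  intro p hp
  simp only [Function.mem_support] at hp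
  have hvw : m₁.v (p.1, p.2*ε) ≠ 0 ∨ m₁.w (p.1, p.2*ε) ≠ 0 := by
    by_contra h
    push_neg at h
    simp [h.1, h.2] at hp
  have hmem : ((p.1, p.2*ε) : I × ℂ) ∈ m₁.v.support ∪ m₁.w.support := by
    rcases hvw with h | h <;> simp [Finsupp.mem_support_iff, h]
  have := hU _ hmem
  simpa [mul_assoc, mul_inv_cancel₀ hε] using this

lemma dd_one_right (μ : Mon I) : dd A ε μ 1 = 0 := by
  unfold dd
  apply finsum_eq_zero_of_forall_eq_zero
  intro p
  rw [uq_one]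
  simp

lemma dd_mul_right (hε : ε ≠ 0) (μ m₂ m₃ : Mon I) :
    dd A ε μ (m₂ * m₃) = dd A ε μ m₂ + dd A ε μ m₃ := by
  classical
  set U := (μ.v.support ∪ μ.w.support).image (fun q : I × ℂ => (q.1, q.2 * ε⁻¹)) with hUdef
  have hU : ∀ q : I × ℂ, q ∈ μ.v.support ∪ μ.w.support → (q.1, q.2 * ε⁻¹) ∈ U := by
    intro q hq; exact Finset.mem_image_of_mem _ hq
  rw [dd_eq_sum A ε hε μ (m₂*m₃) U hU, dd_eq_sum A ε hε μ m₂ U hU, dd_eq_sum A ε hε μ m₃ U hU,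
    ← Finset.sum_add_distrib]
  apply Finset.sum_congr rfl
  intro p _
  rw [uq_mul]
  simp only [Mon.mul_v, Finsupp.add_apply]
  push_cast
  ring

lemma dd_pow_right (hε : ε ≠ 0) (μ m : Mon I) (r : ℕ) :
    dd A ε μ (m ^ r) = r * dd A ε μ m := by
  induction r with
  | zero => simpa using dd_one_right A ε μ
  | succ r ih =>
    rw [pow_succ, dd_mul_right A ε hε, ih]
    push_cast
    ring

lemma dd_mul_left (hε : ε ≠ 0) (m₁ m₂ m₃ : Mon I) :
    dd A ε (m₁ * m₂) m₃ = dd A ε m₁ m₃ + dd A ε m₂ m₃ := by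
  classical
  set W := (m₁.v.support ∪ m₁.w.support) ∪ (m₂.v.support ∪ m₂.w.support) with hW
  set U := W.image (fun q : I × ℂ => (q.1, q.2 * ε⁻¹)) with hUdef
  have hU1 : ∀ q : I × ℂ, q ∈ m₁.v.support ∪ m₁.w.support → (q.1, q.2 * ε⁻¹) ∈ U :=
    fun q hq => Finset.mem_image_of_mem _ (Finset.mem_union_left _ hq)
  have hU2 : ∀ q : I × ℂ, q ∈ m₂.v.support ∪ m₂.w.support → (q.1, q.2 * ε⁻¹) ∈ U :=
    fun q hq => Finset.mem_image_of_mem _ (Finset.mem_union_right _ hq)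
  have hU12 : ∀ q : I × ℂ, q ∈ (m₁*m₂).v.support ∪ (m₁*m₂).w.support → (q.1, q.2 * ε⁻¹) ∈ U := by
    intro q hq
    apply Finset.mem_image_of_mem
    simp only [Mon.mul_v, Mon.mul_w, Finset.mem_union, Finsupp.mem_support_iff,
      Finsupp.add_apply, hW] at hq ⊢
    omega
  rw [dd_eq_sum A ε hε (m₁*m₂) m₃ U hU12, dd_eq_sum A ε hε m₁ m₃ U hU1,
    dd_eq_sum A ε hε m₂ m₃ U hU2, ← Finset.sum_add_distrib]
  apply Finset.sum_congr rfl
  intro p _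
  simp only [Mon.mul_v, Mon.mul_w, Finsupp.add_apply]
  push_cast
  ring

lemma dd_Vmon_left (hε : ε ≠ 0) (i : I) (c : ℂ) (m₂ : Mon I) :
    dd A ε (Vmon i c) m₂ = uq A ε m₂ i (c * ε⁻¹) := by
  classical
  have hU : ∀ q : I × ℂ, q ∈ (Vmon i c).v.support ∪ (Vmon i c).w.support →
      (q.1, q.2 * ε⁻¹) ∈ ({((i, c * ε⁻¹) : I × ℂ)} : Finset (I × ℂ)) := by
    intro q hq
    simp only [Vmon_v, Vmon_w, Finsupp.support_single_ne_zero _ one_ne_zero,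
      Finsupp.support_zero, Finset.union_empty, Finset.mem_singleton] at hq
    subst hq
    simp
  rw [dd_eq_sum A ε hε _ m₂ _ hU, Finset.sum_singleton]
  have h1 : (c * ε⁻¹) * ε = c := by field_simp
  rw [h1]
  simp [Finsupp.single_apply]

open scoped Classical in
lemma dd_Vmon_right (hε : ε ≠ 0) (hsymm : ∀ i j, A i j = A j i) (hdiag : ∀ i, A i i = 2)
    (m₁ : Mon I) (i : I) (c : ℂ) :
    dd A ε m₁ (Vmon i c) = uq A ε m₁ i (c * ε) := by
  classical
  set U : Finset (I × ℂ) :=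
    ((m₁.v.support ∪ m₁.w.support).image fun q : I × ℂ => (q.1, q.2 * ε⁻¹))
      ∪ Finset.univ.image (fun j : I => ((j, c) : I × ℂ))
      ∪ {((i, c*ε) : I × ℂ), (i, c*ε⁻¹)} with hUdef
  have hU : ∀ q : I × ℂ, q ∈ m₁.v.support ∪ m₁.w.support → (q.1, q.2 * ε⁻¹) ∈ U := by
    intro q hq
    exact Finset.mem_union_left _ (Finset.mem_union_left _ (Finset.mem_image_of_mem _ hq))
  rw [dd_eq_sum A ε hε m₁ _ U hU]
  have key : ∀ p : I × ℂ,
      (m₁.v (p.1, p.2 * ε) : ℤ) * uq A ε (Vmon i c) p.1 p.2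
        + (m₁.w (p.1, p.2 * ε) : ℤ) * ((Vmon i c).v p : ℤ)
      = ((if p = (i, c*ε) then -(m₁.v (p.1, p.2*ε) : ℤ) else 0)
        + (if p = (i, c*ε⁻¹) then -(m₁.v (p.1, p.2*ε) : ℤ) else 0)
        + (if A p.1 i = -1 ∧ p.2 = c then (m₁.v (p.1, p.2*ε) : ℤ) else 0))
        + (if p = (i, c) then (m₁.w (p.1, p.2*ε) : ℤ) else 0) := by
    intro p
    rw [uq_Vmon A ε hdiag i p.1 c p.2]
    have e1 : ((i,c) = (p.1, p.2*ε⁻¹)) ↔ p = (i, c*ε) := by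
      rw [Prod.ext_iff, Prod.ext_iff]
      constructor
      · rintro ⟨h1, h2⟩
        refine ⟨h1.symm, ?_⟩
        simp only at h2 ⊢
        rw [h2]
        field_simp
      · rintro ⟨h1, h2⟩
        refine ⟨h1.symm, ?_⟩
        simp only at h2 ⊢
        rw [h2]
        field_simp
    have e2 : ((i,c) = (p.1, p.2*ε)) ↔ p = (i, c*ε⁻¹) := by
      rw [Prod.ext_iff, Prod.ext_iff]
      constructor
      · rintro ⟨h1, h2⟩
        refine ⟨h1.symm, ?_⟩
        simp only at h2 ⊢
        rw [h2]
        field_simp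
      · rintro ⟨h1, h2⟩
        refine ⟨h1.symm, ?_⟩
        simp only at h2 ⊢
        rw [h2]
        field_simp
    have e4 : (((i,c) : I × ℂ) = p) ↔ p = (i, c) := eq_comm
    simp only [Vmon_v, Finsupp.single_apply, e1, e2, e4]
    split_ifs <;> push_cast <;> ring
  rw [Finset.sum_congr rfl (fun p _ => key p)]
  rw [Finset.sum_add_distrib, Finset.sum_add_distrib, Finset.sum_add_distrib]
  have hmem1 : ((i, c*ε) : I × ℂ) ∈ U := by
    apply Finset.mem_union_right
    simp
  have hmem2 : ((i, c*ε⁻¹) : I × ℂ) ∈ U := by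
    apply Finset.mem_union_right
    simp
  have hmem3 : ((i, c) : I × ℂ) ∈ U := by
    apply Finset.mem_union_left
    apply Finset.mem_union_right
    simp
  rw [Finset.sum_ite_eq' U ((i, c*ε) : I × ℂ) (fun p => -(m₁.v (p.1, p.2*ε) : ℤ)), if_pos hmem1]
  rw [Finset.sum_ite_eq' U ((i, c*ε⁻¹) : I × ℂ) (fun p => -(m₁.v (p.1, p.2*ε) : ℤ)), if_pos hmem2]
  rw [Finset.sum_ite_eq' U ((i, c) : I × ℂ) (fun p => (m₁.w (p.1, p.2*ε) : ℤ)), if_pos hmem3]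
  have himg : (Finset.univ.image (fun j : I => ((j,c) : I × ℂ))) ⊆ U := by
    intro x hx
    exact Finset.mem_union_left _ (Finset.mem_union_right _ hx)
  have hS3 : ∑ p ∈ U, (if A p.1 i = -1 ∧ p.2 = c then (m₁.v (p.1, p.2*ε) : ℤ) else 0)
      = ∑ j : I, (if A i j = -1 then (m₁.v (j, c*ε) : ℤ) else 0) := by
    rw [← Finset.sum_subset himg ?_]
    · rw [Finset.sum_image ?_]
      · apply Finset.sum_congr rfl
        intro j _
        rw [hsymm i j]
        simp
      · intro x _ y _ hxy
        exact congrArg Prod.fst hxy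
    · intro x _ hxnot
      rw [if_neg]
      rintro ⟨h1, h2⟩
      apply hxnot
      rw [Finset.mem_image]
      exact ⟨x.1, Finset.mem_univ _, by rw [← h2]⟩
  rw [hS3]
  unfold uq
  have l1 : c * ε⁻¹ * ε = c := by field_simp
  have l2 : c * ε * ε⁻¹ = c := by field_simp
  rw [l1, l2]
  push_cast
  ring

end UqDd
section EiLemmas
open LaurentPolynomial
variable {I : Type} [Fintype I]

/-- Generalized factor of `Ei` with twist `e`. -/
noncomputable def Pfact (B : ℕ → ℕ → LaurentPolynomial ℤ) (i : I) (u : ℕ) (e : ℤ) (c : ℂ) :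
    FRing I :=
  ∑ r ∈ Finset.range (u+1), emb (T ((r:ℤ) * ((u:ℤ) - r) + e * r) * B u r) * mono 0 (Vmon i c ^ r)

lemma d_pow_of_add {d : Mon I → ℤ} (hd : ∀ a b : Mon I, d (a*b) = d a + d b)
    (m : Mon I) (r : ℕ) : d (m ^ r) = r * d m := by
  induction r with
  | zero => simpa using d_one_of_add hd
  | succ r ih =>
    rw [pow_succ, hd, ih]
    push_cast
    ring

lemma mono_eq_emb_mul (k : ℤ) (m : Mon I) : mono k m = emb (T k) * mono 0 m := by
  rw [emb_T, mono_mul, add_zero, one_mul]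

lemma rearr (P Q : LaurentPolynomial ℤ) (m1 m2 : Mon I) :
    emb (I:=I) P * (mono 0 m1 * (emb Q * mono 0 m2)) = emb (P*Q) * mono 0 (m1*m2) := by
  have h := mono_mul (I:=I) 0 0 m1 m2
  norm_num at h
  rw [emb_mul, ← h]
  ring

lemma Ei_eq_prod (A : I → I → ℤ) (ε : ℂ) (B : ℕ → ℕ → LaurentPolynomial ℤ) (i : I) (m : Mon I)
    (S : Finset ℂ) (hd : ∀ a ∈ S, 0 ≤ uq A ε m i a) :
    Ei A ε B i m S = mono 0 m * ∏ a ∈ S, Pfact B i ((uq A ε m i a).toNat) 0 (a * ε) := by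
  unfold Ei Pfact
  congr 1
  apply Finset.prod_congr rfl
  intro a ha
  apply Finset.sum_congr rfl
  intro r _
  have h : ((uq A ε m i a).toNat : ℤ) = uq A ε m i a := Int.toNat_of_nonneg (hd a ha)
  rw [← h]
  norm_num

lemma Ei_subset (A : I → I → ℤ) (ε : ℂ) (B : ℕ → ℕ → LaurentPolynomial ℤ) (i : I) (m : Mon I)
    (hBz : B 0 0 = 1) (S T : Finset ℂ) (hsupp : ∀ a ∉ S, uq A ε m i a = 0) (hST : S ⊆ T) :
    Ei A ε B i m S = Ei A ε B i m T := by
  unfold Ei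
  congr 1
  apply Finset.prod_subset hST
  intro a _ haS
  rw [hsupp a haS]
  norm_num [hBz]

lemma twmap_Pfact (d : Mon I → ℤ) (hd : ∀ a b : Mon I, d (a*b) = d a + d b)
    (B : ℕ → ℕ → LaurentPolynomial ℤ) (i : I) (u : ℕ) (e : ℤ) (c : ℂ) :
    twmap d (Pfact B i u e c) = Pfact B i u (e + 2 * d (Vmon i c)) c := by
  unfold Pfact
  rw [twmap_sum]
  apply Finset.sum_congr rfl
  intro r _
  rw [twmap_mul d hd, twmap_emb d (d_one_of_add hd), twmap_mono, zero_add,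
    mono_eq_emb_mul, ← mul_assoc, ← emb_mul]
  congr 2
  rw [d_pow_of_add hd, mul_comm, ← mul_assoc, ← T_add]
  congr 2
  ring

variable (B : ℕ → ℕ → LaurentPolynomial ℤ)
  (hB : ∀ N r : ℕ, r ≤ N → qfact r * qfact (N - r) * B N r = qfact N)

include hB

lemma Pfact_pascal (i : I) (u : ℕ) (c : ℂ) :
    Pfact B i u 0 c + emb (T (2*(u:ℤ))) * (mono 0 (Vmon i c) * Pfact B i u (-2) c)
      = Pfact B i (u+1) 0 c := by
  classical
  have h1 : Pfact B i u 0 c = ∑ r ∈ Finset.range (u+2),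
      emb (if r ≤ u then T ((r:ℤ)*((u:ℤ)-r)) * B u r else 0) * mono 0 (Vmon i c ^ r) := by
    rw [Finset.sum_range_succ, if_neg (by omega), emb_zero, zero_mul, add_zero]
    unfold Pfact
    apply Finset.sum_congr rfl
    intro r hr
    rw [if_pos (by simpa [Nat.lt_succ_iff] using hr)]
    congr 2
    ring
  have h2 : emb (T (2*(u:ℤ))) * (mono 0 (Vmon i c) * Pfact B i u (-2) c)
      = ∑ r ∈ Finset.range (u+2),
        emb (if 1 ≤ r then T (((r:ℤ)+1)*((u:ℤ)+1-r)) * B u (r-1) else 0)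
          * mono 0 (Vmon i c ^ r) := by
    rw [Finset.sum_range_succ', if_neg (by omega), emb_zero, zero_mul, add_zero]
    unfold Pfact
    rw [Finset.mul_sum, Finset.mul_sum]
    apply Finset.sum_congr rfl
    intro r _
    rw [if_pos (by omega), rearr]
    congr 2
    · rw [← mul_assoc, ← T_add]
      congr 2
      push_cast
      ring
    · rw [pow_succ]
      exact (mul_comm _ _)
  rw [h1, h2, ← Finset.sum_add_distrib]
  unfold Pfact
  apply Finset.sum_congr rfl
  intro r hr
  rw [← add_mul, ← emb_add, B_pascal B hB u r (by simpa [Nat.lt_succ_iff] using hr)]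
  congr 2
  push_cast
  ring

lemma Pfact_II (i : I) (n : ℕ) (hn : 1 ≤ n) (c : ℂ) :
    Pfact B i n 2 c
      = Pfact B i n 0 c
        + (emb (T (2*(n:ℤ))) - 1) * (mono 0 (Vmon i c) * Pfact B i (n-1) 0 c) := by
  classical
  obtain ⟨n', rfl⟩ : ∃ n', n = n' + 1 := ⟨n - 1, by omega⟩
  rw [Nat.add_sub_cancel]
  have h2 : (emb (I:=I) (T (2*((n'+1:ℕ):ℤ))) - 1) * (mono 0 (Vmon i c) * Pfact B i n' 0 c)
      = ∑ r ∈ Finset.range (n'+2),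
        emb (if 1 ≤ r then (T (2*((n'+1:ℕ):ℤ)) - 1)
            * (T (((r:ℤ)-1)*(((n'+1:ℕ):ℤ)-r)) * B n' (r-1)) else 0)
          * mono 0 (Vmon i c ^ r) := by
    rw [Finset.sum_range_succ', if_neg (by omega), emb_zero, zero_mul, add_zero]
    unfold Pfact
    rw [Finset.mul_sum, Finset.mul_sum]
    apply Finset.sum_congr rfl
    intro r _
    rw [if_pos (by omega),
      show (emb (I:=I) (T (2*((n'+1:ℕ):ℤ))) - 1) = emb (T (2*((n'+1:ℕ):ℤ)) - 1) from by
        rw [emb_sub, emb_one], rearr]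
    congr 2
    · rw [Nat.add_sub_cancel]
      congr 3
      push_cast
      ring
    · rw [pow_succ]
      exact (mul_comm _ _)
  rw [h2]
  unfold Pfact
  rw [← Finset.sum_add_distrib]
  apply Finset.sum_congr rfl
  intro r hr
  rw [← add_mul, ← emb_add]
  congr 2
  by_cases h0 : r = 0
  · subst h0
    rw [if_neg (by omega)]
    norm_num
  · rw [if_pos (by omega)]
    have := B_II B hB (n'+1) r (by omega) (by simpa [Nat.lt_succ_iff] using hr)
    rw [Nat.add_sub_cancel] at this
    have h0r : (r:ℤ)*(((n'+1:ℕ):ℤ)-r) + 0*r = (r:ℤ)*(((n'+1:ℕ):ℤ)-r) := by ring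
    rw [h0r]
    exact this
end EiLemmas
section CoreSum
open LaurentPolynomial
variable {I : Type} [Fintype I]

lemma Pfact_e_irrel (B : ℕ → ℕ → LaurentPolynomial ℤ) (i : I) (e e' : ℤ) (c : ℂ) :
    Pfact B i 0 e c = Pfact B i 0 e' c := by
  unfold Pfact
  rw [Finset.sum_range_one, Finset.sum_range_one]
  congr 3
  push_cast
  ring

variable (B : ℕ → ℕ → LaurentPolynomial ℤ)
  (hB : ∀ N r : ℕ, r ≤ N → qfact r * qfact (N - r) * B N r = qfact N)

include hB

lemma core_sum (i : I) (TT : Finset ℂ) (b β' : ℂ) (hb : b ∈ TT) (hβ : β' ∈ TT)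
    (v : ℂ → ℕ) (χ : ℂ → ℂ) :
    (∏ a ∈ TT, Pfact B i (v a) (if a = β' then 2 else 0) (χ a))
      + emb (T (2*(v b : ℤ))) * (mono 0 (Vmon i (χ b))
          * ∏ a ∈ TT, Pfact B i (v a) (if a = b then -2 else 0) (χ a))
    = (∏ a ∈ TT, Pfact B i (v a + if a = b then 1 else 0) 0 (χ a))
      + (emb (T (2*(v β' : ℤ))) - 1) * (mono 0 (Vmon i (χ β'))
          * ∏ a ∈ TT, Pfact B i (v a - if a = β' then 1 else 0) 0 (χ a)) := by
  classical
  by_cases hbβ : b = β'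
  · subst hbβ
    have split : ∀ F : ℂ → FRing I, ∏ a ∈ TT, F a = F b * ∏ a ∈ TT.erase b, F a :=
      fun F => (Finset.mul_prod_erase TT F hb).symm
    rw [split (fun a => Pfact B i (v a) (if a = b then 2 else 0) (χ a)),
      split (fun a => Pfact B i (v a) (if a = b then -2 else 0) (χ a)),
      split (fun a => Pfact B i (v a + if a = b then 1 else 0) 0 (χ a)),
      split (fun a => Pfact B i (v a - if a = b then 1 else 0) 0 (χ a))]
    have hC1 : ∏ a ∈ TT.erase b, Pfact B i (v a) (if a = b then 2 else 0) (χ a)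
        = ∏ a ∈ TT.erase b, Pfact B i (v a) 0 (χ a) :=
      Finset.prod_congr rfl (fun a ha => by rw [if_neg (Finset.ne_of_mem_erase ha)])
    have hC2 : ∏ a ∈ TT.erase b, Pfact B i (v a) (if a = b then -2 else 0) (χ a)
        = ∏ a ∈ TT.erase b, Pfact B i (v a) 0 (χ a) :=
      Finset.prod_congr rfl (fun a ha => by rw [if_neg (Finset.ne_of_mem_erase ha)])
    have hC3 : ∏ a ∈ TT.erase b, Pfact B i (v a + if a = b then 1 else 0) 0 (χ a)
        = ∏ a ∈ TT.erase b, Pfact B i (v a) 0 (χ a) :=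
      Finset.prod_congr rfl (fun a ha => by rw [if_neg (Finset.ne_of_mem_erase ha), add_zero])
    have hC4 : ∏ a ∈ TT.erase b, Pfact B i (v a - if a = b then 1 else 0) 0 (χ a)
        = ∏ a ∈ TT.erase b, Pfact B i (v a) 0 (χ a) :=
      Finset.prod_congr rfl (fun a ha => by rw [if_neg (Finset.ne_of_mem_erase ha), Nat.sub_zero])
    rw [hC1, hC2, hC3, hC4,
      show (if b = b then (2:ℤ) else 0) = 2 from if_pos rfl,
      show (if b = b then (-2:ℤ) else 0) = -2 from if_pos rfl,
      show (if b = b then (1:ℕ) else 0) = 1 from if_pos rfl]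
    rcases Nat.eq_zero_or_pos (v b) with h0 | hpos
    · rw [h0]
      rw [Pfact_e_irrel B i 2 0 (χ b), Pfact_e_irrel B i (-2) 0 (χ b)]
      have hE : emb (I:=I) (T (2*((0:ℕ):ℤ))) = 1 := by
        rw [show (2*((0:ℕ):ℤ)) = 0 from by norm_num, T_zero, emb_one]
      rw [hE]
      have hp := Pfact_pascal B hB i 0 (χ b)
      rw [Pfact_e_irrel B i (-2) 0 (χ b),
        show (2*((0:ℕ):ℤ)) = 0 from by norm_num, T_zero, emb_one] at hp
      linear_combination (∏ a ∈ TT.erase b, Pfact B i (v a) 0 (χ a)) * hp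
    · have hp := Pfact_pascal B hB i (v b) (χ b)
      have hii := Pfact_II B hB i (v b) hpos (χ b)
      linear_combination (∏ a ∈ TT.erase b, Pfact B i (v a) 0 (χ a)) * hp
        + (∏ a ∈ TT.erase b, Pfact B i (v a) 0 (χ a)) * hii
  · have hβ' : β' ∈ TT.erase b := Finset.mem_erase.mpr ⟨fun h => hbβ h.symm, hβ⟩
    have split : ∀ F : ℂ → FRing I,
        ∏ a ∈ TT, F a = F b * (F β' * ∏ a ∈ (TT.erase b).erase β', F a) := by
      intro F
      rw [← Finset.mul_prod_erase TT F hb, ← Finset.mul_prod_erase _ F hβ']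
    rw [split (fun a => Pfact B i (v a) (if a = β' then 2 else 0) (χ a)),
      split (fun a => Pfact B i (v a) (if a = b then -2 else 0) (χ a)),
      split (fun a => Pfact B i (v a + if a = b then 1 else 0) 0 (χ a)),
      split (fun a => Pfact B i (v a - if a = β' then 1 else 0) 0 (χ a))]
    have hmemC : ∀ a ∈ (TT.erase b).erase β', a ≠ b ∧ a ≠ β' := by
      intro a ha
      have h1 := Finset.ne_of_mem_erase ha
      have h2 := Finset.ne_of_mem_erase (Finset.mem_of_mem_erase ha : a ∈ TT.erase b)
      exact ⟨h2, h1⟩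
    have hC1 : ∏ a ∈ (TT.erase b).erase β', Pfact B i (v a) (if a = β' then 2 else 0) (χ a)
        = ∏ a ∈ (TT.erase b).erase β', Pfact B i (v a) 0 (χ a) :=
      Finset.prod_congr rfl (fun a ha => by rw [if_neg (hmemC a ha).2])
    have hC2 : ∏ a ∈ (TT.erase b).erase β', Pfact B i (v a) (if a = b then -2 else 0) (χ a)
        = ∏ a ∈ (TT.erase b).erase β', Pfact B i (v a) 0 (χ a) :=
      Finset.prod_congr rfl (fun a ha => by rw [if_neg (hmemC a ha).1])
    have hC3 : ∏ a ∈ (TT.erase b).erase β',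
          Pfact B i (v a + if a = b then 1 else 0) 0 (χ a)
        = ∏ a ∈ (TT.erase b).erase β', Pfact B i (v a) 0 (χ a) :=
      Finset.prod_congr rfl (fun a ha => by rw [if_neg (hmemC a ha).1, add_zero])
    have hC4 : ∏ a ∈ (TT.erase b).erase β',
          Pfact B i (v a - if a = β' then 1 else 0) 0 (χ a)
        = ∏ a ∈ (TT.erase b).erase β', Pfact B i (v a) 0 (χ a) :=
      Finset.prod_congr rfl (fun a ha => by rw [if_neg (hmemC a ha).2, Nat.sub_zero])
    rw [hC1, hC2, hC3, hC4,
      show (if b = β' then (2:ℤ) else 0) = 0 from if_neg hbβ,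
      show (if β' = β' then (2:ℤ) else 0) = 2 from if_pos rfl,
      show (if b = b then (-2:ℤ) else 0) = -2 from if_pos rfl,
      show (if β' = b then (-2:ℤ) else 0) = 0 from if_neg (fun h => hbβ h.symm),
      show (if b = b then (1:ℕ) else 0) = 1 from if_pos rfl,
      show (if β' = b then (1:ℕ) else 0) = 0 from if_neg (fun h => hbβ h.symm),
      show (if β' = β' then (1:ℕ) else 0) = 1 from if_pos rfl,
      show (if b = β' then (1:ℕ) else 0) = 0 from if_neg hbβ,
      add_zero, Nat.sub_zero]
    rcases Nat.eq_zero_or_pos (v β') with h0 | hpos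
    · rw [h0, Pfact_e_irrel B i 2 0 (χ β')]
      have hE : emb (I:=I) (T (2*((0:ℕ):ℤ))) - 1 = 0 := by
        rw [show (2*((0:ℕ):ℤ)) = 0 from by norm_num, T_zero, emb_one]
        ring
      rw [hE, zero_mul, add_zero]
      have hp := Pfact_pascal B hB i (v b) (χ b)
      linear_combination ((∏ a ∈ (TT.erase b).erase β', Pfact B i (v a) 0 (χ a))
        * Pfact B i 0 0 (χ β')) * hp
    · have hp := Pfact_pascal B hB i (v b) (χ b)
      have hii := Pfact_II B hB i (v β') hpos (χ β')
      linear_combination ((∏ a ∈ (TT.erase b).erase β', Pfact B i (v a) 0 (χ a))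
          * Pfact B i (v β') 0 (χ β')) * hp
        + ((∏ a ∈ (TT.erase b).erase β', Pfact B i (v a) 0 (χ a))
          * Pfact B i (v b) 0 (χ b)) * hii

end CoreSum
open LaurentPolynomial in
/-- with `f = m'(1+V_{i,bε})` (`u_{i,b}(m') = 1`, `u_{i,c}(m') = 0` for
`c ≠ b`) and `g = E_i(m)` for an `i`-dominant monomial `m`, setting `n = u_{i,bε⁻²}(m)`:
`t^{−2d(m',m)} f ∗ g − E_i(mm') = (t^{2n} − 1) E_i(mm'V_{i,bε⁻¹})` if `n > 0`, and
`f ∗ g = t^{2d(m',m)} E_i(mm')` if `n = 0`.  In particular `f ∗ g ∈ K̂_{t,i}`. -/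
theorem star_Ei_formula {I : Type} [Fintype I] (A : I → I → ℤ)
    (hsymm : ∀ i j, A i j = A j i) (hdiag : ∀ i, A i i = 2)
    (hoff : ∀ i j, i ≠ j → A i j = 0 ∨ A i j = -1)
    (ε : ℂ) (hε : ∀ k : ℕ, 0 < k → ε ^ k ≠ 1)
    (B : ℕ → ℕ → LaurentPolynomial ℤ)
    (hB : ∀ N r : ℕ, r ≤ N → qfact r * qfact (N - r) * B N r = qfact N)
    (i : I) (b : ℂ) (m m' : Mon I)
    (hmdom : ∀ a : ℂ, 0 ≤ uq A ε m i a)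
    (S : Finset ℂ) (hS : ∀ a : ℂ, a ∉ S → uq A ε m i a = 0)
    (hm'1 : uq A ε m' i b = 1) (hm'0 : ∀ c : ℂ, c ≠ b → uq A ε m' i c = 0)
    (n : ℕ) (hn : uq A ε m i (b * ε⁻¹ * ε⁻¹) = (n : ℤ))
    (S' : Finset ℂ) (hS' : ∀ a : ℂ, a ∉ S' → uq A ε (m * m') i a = 0)
    (S'' : Finset ℂ)
    (hS'' : ∀ a : ℂ, a ∉ S'' → uq A ε (m * m' * Vmon i (b * ε⁻¹)) i a = 0) :
    (n = 0 →
      starD (dd A ε) (mono 0 m' + mono 0 (m' * Vmon i (b * ε))) (Ei A ε B i m S)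
        = emb (T (2 * dd A ε m' m)) * Ei A ε B i (m * m') S') ∧
    (0 < n →
      emb (T (-(2 * dd A ε m' m)))
          * starD (dd A ε) (mono 0 m' + mono 0 (m' * Vmon i (b * ε))) (Ei A ε B i m S)
        - Ei A ε B i (m * m') S'
        = (emb (T (2 * (n : ℤ))) - 1) * Ei A ε B i (m * m' * Vmon i (b * ε⁻¹)) S'') ∧
    starD (dd A ε) (mono 0 m' + mono 0 (m' * Vmon i (b * ε))) (Ei A ε B i m S)
      ∈ Khat A ε B i := by
  classical
  -- ε ≠ 0
  have hε0 : ε ≠ 0 := by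
    intro h0
    obtain ⟨a, ha⟩ := Infinite.exists_notMem_finset (S ∪ S'' ∪ {b})
    have haS : a ∉ S := fun h => ha (by simp [h])
    have haS'' : a ∉ S'' := fun h => ha (by simp [h])
    have hab : a ≠ b := fun h => ha (by simp [h])
    have h1 := hS'' a haS''
    rw [uq_mul, uq_mul, hS a haS, hm'0 a hab, uq_Vmon A ε hdiag i i (b*ε⁻¹) a] at h1
    rw [h0] at h1
    simp only [inv_zero, mul_zero] at h1
    rw [if_neg (fun hc : A i i = -1 ∧ a = 0 => by have h2 := hdiag i; have h3 := hc.1; omega)] at h1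
    simp only [if_true] at h1
    omega
  set β : ℂ := b * ε⁻¹ * ε⁻¹ with hβdef
  have hβε : β * ε = b * ε⁻¹ := by rw [hβdef]; field_simp; try ring
  have hβεε : β * ε * ε = b := by rw [hβdef]; field_simp; try ring
  have hbe : b * ε * ε⁻¹ = b := by field_simp; try ring
  have hB00 : B 0 0 = 1 := B_zero B hB 0
  have huqm' : ∀ a : ℂ, uq A ε m' i a = (if a = b then 1 else 0) := by
    intro a
    by_cases h : a = b
    · rw [h, hm'1, if_pos rfl]
    · rw [hm'0 a h, if_neg h]
  have hC2iff : ∀ a : ℂ, ((i, b*ε⁻¹) = ((i : I), a*ε)) ↔ a = β := by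
    intro a
    constructor
    · intro h
      have h2 := (Prod.ext_iff.mp h).2
      simp only at h2
      rw [hβdef, h2]
      field_simp
    · intro h
      rw [h, ← hβε]
  have hC1iff : ∀ a : ℂ, ((i, b*ε⁻¹) = ((i : I), a*ε⁻¹)) ↔ a = b := by
    intro a
    constructor
    · intro h
      have h2 := (Prod.ext_iff.mp h).2
      simp only at h2
      exact (mul_right_cancel₀ (inv_ne_zero hε0) h2).symm
    · intro h
      rw [h]
  have huqy : ∀ a : ℂ, uq A ε (Vmon i (b*ε⁻¹)) i a
      = -(if a = b then 1 else 0) - (if a = β then 1 else 0) := by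
    intro a
    rw [uq_Vmon A ε hdiag i i (b*ε⁻¹) a,
      if_congr (hC1iff a) rfl rfl, if_congr (hC2iff a) rfl rfl,
      if_neg (fun hc : A i i = -1 ∧ a = b*ε⁻¹ => by have h2 := hdiag i; have h3 := hc.1; omega)]
    split_ifs <;> ring
  set TT : Finset ℂ := S ∪ S' ∪ S'' ∪ {b, β} with hTTdef
  have hSTT : S ⊆ TT := by intro a ha; simp [hTTdef, ha]
  have hS'TT : S' ⊆ TT := by intro a ha; simp [hTTdef, ha]
  have hS''TT : S'' ⊆ TT := by intro a ha; simp [hTTdef, ha]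
  have hbTT : b ∈ TT := by simp [hTTdef]
  have hβTT : β ∈ TT := by simp [hTTdef]
  have hdom' : ∀ a, 0 ≤ uq A ε (m*m') i a := by
    intro a
    rw [uq_mul, huqm' a]
    have := hmdom a
    split <;> omega
  have htn : ∀ a, (uq A ε (m*m') i a).toNat
      = (uq A ε m i a).toNat + (if a = b then 1 else 0) := by
    intro a
    rw [uq_mul, huqm' a]
    have := hmdom a
    split <;> omega
  have hnβ : (uq A ε m i β).toNat = n := by rw [hn]; omega
  have hdomy : 0 < n → ∀ a, 0 ≤ uq A ε (m*m'*Vmon i (b*ε⁻¹)) i a := by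
    intro hpos a
    rw [uq_mul, uq_mul, huqm' a, huqy a]
    have h1 := hmdom a
    by_cases haβ : a = β
    · rw [haβ, hn]
      split_ifs <;> omega
    · rw [if_neg haβ]
      split_ifs <;> omega
  have hty : ∀ a, (uq A ε (m*m'*Vmon i (b*ε⁻¹)) i a).toNat
      = (uq A ε m i a).toNat - (if a = β then 1 else 0) := by
    intro a
    rw [uq_mul, uq_mul, huqm' a, huqy a]
    have h1 := hmdom a
    split_ifs <;> omega
  -- dd values
  have hd1V : ∀ a : ℂ, dd A ε m' (Vmon i (a*ε)) = (if a = β then 1 else 0) := by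
    intro a
    rw [dd_Vmon_right A ε hε0 hsymm hdiag m' i (a*ε), huqm' (a*ε*ε)]
    have hiff : (a*ε*ε = b) ↔ a = β := by
      constructor
      · intro h
        rw [hβdef, ← h]
        field_simp
      · intro h
        rw [h]
        exact hβεε
    rw [if_congr hiff rfl rfl]
  have hdxV : ∀ a : ℂ, dd A ε (Vmon i (b*ε)) (Vmon i (a*ε))
      = -(if a = β then 1 else 0) - (if a = b then 1 else 0) := by
    intro a
    rw [dd_Vmon_left A ε hε0 i (b*ε) (Vmon i (a*ε)), hbe,
      uq_Vmon A ε hdiag i i (a*ε) b]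
    have h1 : ((i, a*ε) = ((i : I), b*ε⁻¹)) ↔ a = β := by
      constructor
      · intro h
        have h2 := (Prod.ext_iff.mp h).2
        simp only at h2
        rw [hβdef, ← h2]
        field_simp
      · intro h
        rw [h, hβε]
    have h2 : ((i, a*ε) = ((i : I), b*ε)) ↔ a = b := by
      constructor
      · intro h
        have h2 := (Prod.ext_iff.mp h).2
        simp only at h2
        exact mul_right_cancel₀ hε0 h2
      · intro h
        rw [h]
    rw [if_congr h1 rfl rfl, if_congr h2 rfl rfl,
      if_neg (fun hc : A i i = -1 ∧ b = a*ε => by have hd := hdiag i; have h3 := hc.1; omega)]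
    split_ifs <;> ring
  have hd2V : ∀ a : ℂ, dd A ε (m' * Vmon i (b*ε)) (Vmon i (a*ε))
      = -(if a = b then 1 else 0) := by
    intro a
    rw [dd_mul_left A ε hε0, hd1V a, hdxV a]
    ring
  have hdxm : dd A ε (Vmon i (b*ε)) m = uq A ε m i b := by
    rw [dd_Vmon_left A ε hε0, hbe]
  -- expand g
  have hEg : Ei A ε B i m S
      = mono 0 m * ∏ a ∈ TT, Pfact B i ((uq A ε m i a).toNat) 0 (a*ε) := by
    rw [Ei_subset A ε B i m hB00 S TT hS hSTT, Ei_eq_prod A ε B i m TT (fun a _ => hmdom a)]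
  have htw : ∀ (μ : Mon I),
      twmap (dd A ε μ) (mono 0 m * ∏ a ∈ TT, Pfact B i ((uq A ε m i a).toNat) 0 (a*ε))
      = mono (2 * dd A ε μ m) m
        * ∏ a ∈ TT, Pfact B i ((uq A ε m i a).toNat) (2 * dd A ε μ (Vmon i (a*ε))) (a*ε) := by
    intro μ
    have hdd := dd_mul_right A ε hε0 μ
    rw [twmap_mul _ hdd, twmap_mono, twmap_prod _ hdd, zero_add]
    congr 1
    apply Finset.prod_congr rfl
    intro a _
    rw [twmap_Pfact _ hdd, zero_add]
  have hsplit : starD (dd A ε) (mono 0 m' + mono 0 (m' * Vmon i (b * ε))) (Ei A ε B i m S)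
      = mono 0 m' * twmap (dd A ε m') (Ei A ε B i m S)
        + mono 0 (m' * Vmon i (b*ε))
          * twmap (dd A ε (m' * Vmon i (b*ε))) (Ei A ε B i m S) := by
    rw [starD_add_left]
    congr 1
    · exact starD_single_left (dd A ε) (Multiplicative.ofAdd 0, m') 1 _
    · exact starD_single_left (dd A ε) (Multiplicative.ofAdd 0, m' * Vmon i (b*ε)) 1 _
  have hmain : starD (dd A ε) (mono 0 m' + mono 0 (m' * Vmon i (b * ε))) (Ei A ε B i m S)
      = mono (2 * dd A ε m' m) (m' * m)
        * ((∏ a ∈ TT, Pfact B i ((uq A ε m i a).toNat) (if a = β then 2 else 0) (a*ε))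
          + emb (T (2*(((uq A ε m i b).toNat : ℕ) : ℤ)))
            * (mono 0 (Vmon i (b*ε))
              * ∏ a ∈ TT, Pfact B i ((uq A ε m i a).toNat) (if a = b then -2 else 0) (a*ε))) := by
    rw [hsplit, hEg, htw m', htw (m' * Vmon i (b*ε))]
    have e1 : ∏ a ∈ TT, Pfact B i ((uq A ε m i a).toNat) (2 * dd A ε m' (Vmon i (a*ε))) (a*ε)
        = ∏ a ∈ TT, Pfact B i ((uq A ε m i a).toNat) (if a = β then 2 else 0) (a*ε) :=
      Finset.prod_congr rfl (fun a _ => by rw [hd1V a]; split_ifs <;> norm_num)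
    have e2 : ∏ a ∈ TT,
          Pfact B i ((uq A ε m i a).toNat) (2 * dd A ε (m' * Vmon i (b*ε)) (Vmon i (a*ε))) (a*ε)
        = ∏ a ∈ TT, Pfact B i ((uq A ε m i a).toNat) (if a = b then -2 else 0) (a*ε) :=
      Finset.prod_congr rfl (fun a _ => by rw [hd2V a]; split_ifs <;> norm_num)
    rw [e1, e2]
    have hf2 : dd A ε (m' * Vmon i (b*ε)) m = dd A ε m' m + ((uq A ε m i b).toNat : ℤ) := by
      rw [dd_mul_left A ε hε0, hdxm, Int.toNat_of_nonneg (hmdom b)]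
    rw [hf2]
    have r1 : ∀ (k : ℤ) (mm : Mon I) (P : FRing I),
        mono 0 mm * (mono k m * P) = mono k (mm * m) * P := by
      intro k mm P
      rw [← mul_assoc, mono_mul, zero_add]
    rw [r1, r1]
    have r2 : mono (2 * (dd A ε m' m + ((uq A ε m i b).toNat : ℤ))) (m' * Vmon i (b*ε) * m)
        = mono (2 * dd A ε m' m) (m' * m)
          * (emb (T (2*(((uq A ε m i b).toNat : ℕ) : ℤ))) * mono 0 (Vmon i (b*ε))) := by
      rw [emb_T, mono_mul, mono_mul]
      have hk : 2 * (dd A ε m' m + ((uq A ε m i b).toNat : ℤ))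
          = 2 * dd A ε m' m + (2*(((uq A ε m i b).toNat : ℕ) : ℤ) + 0) := by ring
      have hm : m' * Vmon i (b*ε) * m = m' * m * (1 * Vmon i (b*ε)) := by
        rw [one_mul]
        exact mul_right_comm m' (Vmon i (b*ε)) m
      rw [hk, hm]
    rw [r2]
    ring
  -- core identity
  have hcore := core_sum B hB i TT b β hbTT hβTT (fun a => (uq A ε m i a).toNat)
    (fun a => a * ε)
  beta_reduce at hcore
  rw [hnβ, hβε] at hcore
  have hKEY : starD (dd A ε) (mono 0 m' + mono 0 (m' * Vmon i (b * ε))) (Ei A ε B i m S)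
      = mono (2 * dd A ε m' m) (m' * m)
        * ((∏ a ∈ TT, Pfact B i ((uq A ε m i a).toNat + (if a = b then 1 else 0)) 0 (a*ε))
          + (emb (T (2*(n:ℤ))) - 1) * (mono 0 (Vmon i (b*ε⁻¹))
              * ∏ a ∈ TT,
                  Pfact B i ((uq A ε m i a).toNat - (if a = β then 1 else 0)) 0 (a*ε))) := by
    rw [hmain, hcore]
  have hEmm' : Ei A ε B i (m*m') S'
      = mono 0 (m*m')
        * ∏ a ∈ TT, Pfact B i ((uq A ε m i a).toNat + (if a = b then 1 else 0)) 0 (a*ε) := by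
    rw [Ei_subset A ε B i (m*m') hB00 S' TT hS' hS'TT,
      Ei_eq_prod A ε B i (m*m') TT (fun a _ => hdom' a)]
    congr 1
    exact Finset.prod_congr rfl (fun a _ => by rw [htn a])
  have hEy : 0 < n → Ei A ε B i (m*m'*Vmon i (b*ε⁻¹)) S''
      = mono 0 (m*m'*Vmon i (b*ε⁻¹))
        * ∏ a ∈ TT, Pfact B i ((uq A ε m i a).toNat - (if a = β then 1 else 0)) 0 (a*ε) := by
    intro hpos
    rw [Ei_subset A ε B i _ hB00 S'' TT hS'' hS''TT,
      Ei_eq_prod A ε B i _ TT (fun a _ => hdomy hpos a)]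
    congr 1
    exact Finset.prod_congr rfl (fun a _ => by rw [hty a])
  -- clause 1
  have hc1 : n = 0 →
      starD (dd A ε) (mono 0 m' + mono 0 (m' * Vmon i (b * ε))) (Ei A ε B i m S)
        = emb (T (2 * dd A ε m' m)) * Ei A ε B i (m * m') S' := by
    intro hn0
    have hK0 := hKEY
    rw [hn0] at hK0
    have hzero : (emb (I:=I) (T (2*((0:ℕ):ℤ))) - 1) = 0 := by
      rw [show (2*((0:ℕ):ℤ)) = 0 from by norm_num, T_zero, emb_one]
      ring
    rw [hzero, zero_mul, add_zero] at hK0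
    rw [hK0, hEmm', mono_eq_emb_mul, mul_comm m' m, mul_assoc]
  have hc2 : 0 < n →
      emb (T (-(2 * dd A ε m' m)))
          * starD (dd A ε) (mono 0 m' + mono 0 (m' * Vmon i (b * ε))) (Ei A ε B i m S)
        - Ei A ε B i (m * m') S'
        = (emb (T (2 * (n : ℤ))) - 1) * Ei A ε B i (m * m' * Vmon i (b * ε⁻¹)) S'' := by
    intro hpos
    rw [hKEY, hEmm', hEy hpos]
    have hcan : emb (I:=I) (T (-(2 * dd A ε m' m))) * mono (2 * dd A ε m' m) (m' * m)
        = mono 0 (m' * m) := by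
      rw [mono_eq_emb_mul, ← mul_assoc, ← emb_mul, ← T_add, neg_add_cancel, T_zero, emb_one,
        one_mul]
    rw [show m' * m = m * m' from mul_comm m' m] at hcan ⊢
    have hm0 : mono 0 (m*m') * mono 0 (Vmon i (b*ε⁻¹)) = mono 0 (m*m'*Vmon i (b*ε⁻¹)) := by
      rw [mono_mul, add_zero]
    linear_combination
      ((∏ a ∈ TT, Pfact B i ((uq A ε m i a).toNat + (if a = b then 1 else 0)) 0 (a*ε))
        + (emb (T (2*(n:ℤ))) - 1) * (mono 0 (Vmon i (b*ε⁻¹))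
            * ∏ a ∈ TT, Pfact B i ((uq A ε m i a).toNat - (if a = β then 1 else 0)) 0 (a*ε)))
        * hcan
      + ((emb (T (2*(n:ℤ))) - 1)
          * ∏ a ∈ TT, Pfact B i ((uq A ε m i a).toNat - (if a = β then 1 else 0)) 0 (a*ε))
        * hm0
  refine ⟨hc1, hc2, ?_⟩
  rcases Nat.eq_zero_or_pos n with h0 | hpos
  · rw [hc1 h0]
    exact Submodule.subset_span ⟨2 * dd A ε m' m, m*m', S', hdom', hS', rfl⟩
  · have h2 := hc2 hpos
    have hinv : emb (I:=I) (T (2 * dd A ε m' m)) * emb (T (-(2 * dd A ε m' m))) = 1 := by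
      rw [← emb_mul, ← T_add, add_neg_cancel, T_zero, emb_one]
    have hX : starD (dd A ε) (mono 0 m' + mono 0 (m' * Vmon i (b * ε))) (Ei A ε B i m S)
        = emb (T (2 * dd A ε m' m))
          * (Ei A ε B i (m*m') S'
            + (emb (T (2*(n:ℤ))) - 1) * Ei A ε B i (m*m'*Vmon i (b*ε⁻¹)) S'') := by
      linear_combination (emb (I:=I) (T (2 * dd A ε m' m))) * h2
        - (starD (dd A ε) (mono 0 m' + mono 0 (m' * Vmon i (b * ε))) (Ei A ε B i m S)) * hinv
    rw [hX, mul_add]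
    apply Submodule.add_mem
    · exact Submodule.subset_span ⟨2 * dd A ε m' m, m*m', S', hdom', hS', rfl⟩
    · have hsplit2 : emb (I:=I) (T (2 * dd A ε m' m))
          * ((emb (T (2*(n:ℤ))) - 1) * Ei A ε B i (m*m'*Vmon i (b*ε⁻¹)) S'')
          = emb (T (2 * dd A ε m' m + 2*(n:ℤ))) * Ei A ε B i (m*m'*Vmon i (b*ε⁻¹)) S''
            - emb (T (2 * dd A ε m' m)) * Ei A ε B i (m*m'*Vmon i (b*ε⁻¹)) S'' := by
        rw [T_add, emb_mul]
        ring
      rw [hsplit2]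
      apply Submodule.sub_mem
      · exact Submodule.subset_span
          ⟨2 * dd A ε m' m + 2*(n:ℤ), m*m'*Vmon i (b*ε⁻¹), S'', hdomy hpos, hS'', rfl⟩
      · exact Submodule.subset_span
          ⟨2 * dd A ε m' m, m*m'*Vmon i (b*ε⁻¹), S'', hdomy hpos, hS'', rfl⟩
end

section
/- Let ε be a primitive s-th root of unity and q not a root of unity. For an I×ℤ-graded collection of exponents defining a monomial m = ∏_{i,n} W_{i,aq^n}^{N_{i,n}} V_{i,aq^n}^{M_{i,n}} and its shifts m[k] (replacing exponents N_{i,n}, M_{i,n} by N_{i,n+k}, M_{i,n+k}), the dimension identity d(e^V e^W, e^V e^W) = Σ_{k∈ℤ} d_q(m, m[ks]) holds, where e^V e^W is the I×(ℤ/sℤ)-graded monomial obtained by reducing exponents modulo s (i.e., dim V_i(ε^n) = Σ_{k≡n mod s} M_{i,k}, dim W_i(ε^n) = Σ_{k≡n mod s} N_{i,k}), d is computed with parameter ε, and d_q with parameter q. -/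
open scoped BigOperators

/-- A monomial in variables `V_{i,aq^n}`, `W_{i,aq^n}`, recorded by its `I × ℤ`-graded
exponents (`M_{i,n}` for `V`, `N_{i,n}` for `W`). -/
@[ext] structure MonZ (I : Type) where
  v : I × ℤ →₀ ℕ
  w : I × ℤ →₀ ℕ

/-- A monomial in variables `V_{i,ε^n}`, `W_{i,ε^n}` (`ε` a primitive `s`-th root of
unity), recorded by its `I × (ℤ/sℤ)`-graded exponents. -/
@[ext] structure MonC (I : Type) (s : ℕ) where
  v : I × ZMod s →₀ ℕ
  w : I × ZMod s →₀ ℕ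

/-- `u_{i,aq^n}` for `ℤ`-graded monomials (parameter `q`: multiplication by `q` is the
shift `n ↦ n+1`). -/
noncomputable def uZ {I : Type} [Fintype I] (A : I → I → ℤ) (m : MonZ I) (i : I) (n : ℤ) : ℤ :=
  (m.w (i, n) : ℤ) - (m.v (i, n - 1) : ℤ) - (m.v (i, n + 1) : ℤ)
    + ∑ j : I, if A i j = -1 then (m.v (j, n) : ℤ) else 0

/-- `d_q(m¹,m²)` for `ℤ`-graded monomials. -/
noncomputable def ddZ {I : Type} [Fintype I] (A : I → I → ℤ) (m₁ m₂ : MonZ I) : ℤ :=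
  ∑ᶠ p : I × ℤ, ((m₁.v (p.1, p.2 + 1) : ℤ) * uZ A m₂ p.1 p.2
    + (m₁.w (p.1, p.2 + 1) : ℤ) * (m₂.v p : ℤ))

/-- `u_{i,ε^n}` for `ℤ/sℤ`-graded monomials (parameter `ε` a primitive `s`-th root of
unity: multiplication by `ε` is the shift `n ↦ n+1` in `ℤ/sℤ`). -/
noncomputable def uC {I : Type} [Fintype I] (s : ℕ) (A : I → I → ℤ) (m : MonC I s)
    (i : I) (n : ZMod s) : ℤ :=
  (m.w (i, n) : ℤ) - (m.v (i, n - 1) : ℤ) - (m.v (i, n + 1) : ℤ)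
    + ∑ j : I, if A i j = -1 then (m.v (j, n) : ℤ) else 0

/-- `d(m¹,m²)` (parameter `ε`) for `ℤ/sℤ`-graded monomials. -/
noncomputable def ddC {I : Type} [Fintype I] (s : ℕ) (A : I → I → ℤ)
    (m₁ m₂ : MonC I s) : ℤ :=
  ∑ᶠ p : I × ZMod s, ((m₁.v (p.1, p.2 + 1) : ℤ) * uC s A m₂ p.1 p.2
    + (m₁.w (p.1, p.2 + 1) : ℤ) * (m₂.v p : ℤ))

/-- The mod-`s` reduction `e^V e^W` of a `ℤ`-graded monomial:
`dim V_i(ε^n) = Σ_{k ≡ n mod s} M_{i,k}`, `dim W_i(ε^n) = Σ_{k ≡ n mod s} N_{i,k}`. -/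
noncomputable def reduceM {I : Type} (s : ℕ) (m : MonZ I) : MonC I s :=
  ⟨Finsupp.mapDomain (fun p : I × ℤ => (p.1, (p.2 : ZMod s))) m.v,
   Finsupp.mapDomain (fun p : I × ℤ => (p.1, (p.2 : ZMod s))) m.w⟩

/-- The shifted monomial `m[k]`: its exponents at position `n` are those of `m` at
position `n + k`. -/
noncomputable def shiftM {I : Type} (k : ℤ) (m : MonZ I) : MonZ I :=
  ⟨Finsupp.mapDomain (fun p : I × ℤ => (p.1, p.2 - k)) m.v,
   Finsupp.mapDomain (fun p : I × ℤ => (p.1, p.2 - k)) m.w⟩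


open scoped BigOperators Classical

section Aux

variable {I : Type} [Fintype I] (s : ℕ)

/-- Reduction of a finitely supported function on `I × ℤ` to `I × ZMod s`. -/
noncomputable def red (f : I × ℤ → ℤ) (x : I × ZMod s) : ℤ :=
  ∑ᶠ n : ℤ, if ((n : ZMod s) = x.2) then f (x.1, n) else 0

lemma red_eq_sum {N : Finset ℤ} {f : I × ℤ → ℤ}
    (hf : ∀ p : I × ℤ, f p ≠ 0 → p.2 ∈ N) (x : I × ZMod s) :
    red s f x = ∑ n ∈ N, if ((n : ZMod s) = x.2) then f (x.1, n) else 0 := by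
  apply finsum_eq_finset_sum_of_support_subset
  intro n hn
  simp only [Function.mem_support] at hn
  by_cases h : ((n : ZMod s) = x.2)
  · rw [if_pos h] at hn
    exact hf (x.1, n) hn
  · rw [if_neg h] at hn; exact absurd rfl hn

lemma red_shift (f : I × ℤ → ℤ) (c : ℤ) (x : I × ZMod s) :
    red s (fun p => f (p.1, p.2 + c)) x = red s f (x.1, x.2 + (c : ZMod s)) := by
  unfold red
  conv_rhs => rw [← finsum_comp_equiv (Equiv.addRight c)]
  apply finsum_congr
  intro n
  simp only [Equiv.coe_addRight]
  have h : ((↑(n + c) : ZMod s) = x.2 + (c : ZMod s)) ↔ ((n : ZMod s) = x.2) := by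
    push_cast
    constructor
    · intro h; exact add_right_cancel h
    · intro h; rw [h]
  exact if_congr h.symm rfl rfl

end Aux

section Master

variable {I : Type} [Fintype I] (s : ℕ) [NeZero s]

variable {N : Finset ℤ} {f g : I × ℤ → ℤ}

/-- the finitely many `k` that can contribute -/
noncomputable def Kset (N : Finset ℤ) (s : ℕ) : Finset ℤ :=
  (N ×ˢ N).image fun ab => (ab.2 - ab.1) / (s : ℤ)

lemma red_eq_sum_T (hf : ∀ p : I × ℤ, f p ≠ 0 → p.2 ∈ N) (x : I × ZMod s) :
    red s f x = ∑ p ∈ (Finset.univ : Finset I) ×ˢ N,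
      if ((p.1, (p.2 : ZMod s)) : I × ZMod s) = x then f p else 0 := by
  rw [red_eq_sum s hf x, Finset.sum_product, Finset.sum_comm]
  refine Finset.sum_congr rfl fun n _ => ?_
  by_cases hn : ((n : ZMod s) = x.2)
  · rw [if_pos hn]
    symm
    have h1 : ∀ i : I, (((i, (n : ZMod s)) : I × ZMod s) = x) ↔ (i = x.1) := by
      intro i
      constructor
      · intro h; exact congrArg Prod.fst h
      · intro h; subst h; exact Prod.ext rfl hn
    calc (∑ i : I, if ((i, (n : ZMod s)) : I × ZMod s) = x then f (i, n) else 0)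
        = ∑ i : I, if i = x.1 then f (i, n) else 0 :=
          Finset.sum_congr rfl fun i _ => if_congr (h1 i) rfl rfl
      _ = f (x.1, n) := Fintype.sum_ite_eq' x.1 _
  · rw [if_neg hn]
    symm
    apply Finset.sum_eq_zero
    intro i _
    rw [if_neg]
    intro h
    exact hn (congrArg Prod.snd h)

lemma inner_eq (hf : ∀ p : I × ℤ, f p ≠ 0 → p.2 ∈ N) (hg : ∀ p : I × ℤ, g p ≠ 0 → p.2 ∈ N)
    (k : ℤ) :
    (∑ᶠ p : I × ℤ, f p * g (p.1, p.2 + k * s))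
      = ∑ p ∈ (Finset.univ : Finset I) ×ˢ N, ∑ q ∈ (Finset.univ : Finset I) ×ˢ N,
          if q = (p.1, p.2 + k * s) then f p * g q else 0 := by
  rw [finsum_eq_finset_sum_of_support_subset]
  · refine Finset.sum_congr rfl fun p _ => ?_
    rw [Finset.sum_ite_eq' (((Finset.univ : Finset I)) ×ˢ N) (p.1, p.2 + k * s)
      (fun q => f p * g q)]
    by_cases hmem : ((p.1, p.2 + k * s) : I × ℤ) ∈ (Finset.univ : Finset I) ×ˢ N
    · rw [if_pos hmem]
    · rw [if_neg hmem]
      have : g (p.1, p.2 + k * s) = 0 := by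
        by_contra hne
        exact hmem (Finset.mem_product.2 ⟨Finset.mem_univ _, hg _ hne⟩)
      rw [this, mul_zero]
  · intro p hp
    simp only [Function.mem_support] at hp
    have : f p ≠ 0 := fun h => hp (by rw [h, zero_mul])
    exact Finset.mem_coe.2 (Finset.mem_product.2 ⟨Finset.mem_univ _, hf _ this⟩)

lemma master_subset (hf : ∀ p : I × ℤ, f p ≠ 0 → p.2 ∈ N)
    (hg : ∀ p : I × ℤ, g p ≠ 0 → p.2 ∈ N) :
    (Function.support fun k : ℤ => ∑ᶠ p : I × ℤ, f p * g (p.1, p.2 + k * s))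
      ⊆ ↑(Kset N s) := by
  intro k hk
  simp only [Function.mem_support] at hk
  rw [inner_eq s hf hg k] at hk
  obtain ⟨p, hp, hp2⟩ := Finset.exists_ne_zero_of_sum_ne_zero hk
  obtain ⟨q, hq, hq2⟩ := Finset.exists_ne_zero_of_sum_ne_zero hp2
  have hqe : q = ((p.1, p.2 + k * s) : I × ℤ) := by
    by_contra h; rw [if_neg h] at hq2; exact hq2 rfl
  rw [if_pos hqe] at hq2
  have hsne : ((s : ℤ)) ≠ 0 := by exact_mod_cast (NeZero.ne s)
  have hkval : (q.2 - p.2) / (s : ℤ) = k := by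
    have h2 : q.2 = p.2 + k * s := congrArg Prod.snd hqe
    rw [h2]
    rw [show p.2 + k * (s : ℤ) - p.2 = k * s by ring]
    exact Int.mul_ediv_cancel k hsne
  refine Finset.mem_coe.2 (Finset.mem_image.2 ⟨(p.2, q.2), ?_, hkval⟩)
  exact Finset.mem_product.2 ⟨(Finset.mem_product.1 hp).2, (Finset.mem_product.1 hq).2⟩

lemma master_support (hf : ∀ p : I × ℤ, f p ≠ 0 → p.2 ∈ N)
    (hg : ∀ p : I × ℤ, g p ≠ 0 → p.2 ∈ N) :
    (Function.support fun k : ℤ => ∑ᶠ p : I × ℤ, f p * g (p.1, p.2 + k * s)).Finite :=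
  ((Kset N s).finite_toSet).subset (master_subset s hf hg)

lemma master (hf : ∀ p : I × ℤ, f p ≠ 0 → p.2 ∈ N)
    (hg : ∀ p : I × ℤ, g p ≠ 0 → p.2 ∈ N) :
    ∑ x : I × ZMod s, red s f x * red s g x
      = ∑ᶠ k : ℤ, ∑ᶠ p : I × ℤ, f p * g (p.1, p.2 + k * s) := by
  have hsne : ((s : ℤ)) ≠ 0 := by exact_mod_cast (NeZero.ne s)
  set T : Finset (I × ℤ) := (Finset.univ : Finset I) ×ˢ N with hT
  -- RHS
  rw [finsum_eq_finset_sum_of_support_subset _ (master_subset s hf hg)]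
  have rhs_eq : ∑ k ∈ Kset N s, (∑ᶠ p : I × ℤ, f p * g (p.1, p.2 + k * s))
      = ∑ p ∈ T, ∑ q ∈ T, if (p.1 = q.1 ∧ (s : ℤ) ∣ (q.2 - p.2)) then f p * g q else 0 := by
    rw [Finset.sum_congr rfl fun k _ => inner_eq s hf hg k]
    rw [Finset.sum_comm]
    refine Finset.sum_congr rfl fun p hp => ?_
    rw [Finset.sum_comm]
    refine Finset.sum_congr rfl fun q hq => ?_
    by_cases hc : p.1 = q.1 ∧ (s : ℤ) ∣ (q.2 - p.2)
    · rw [if_pos hc]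
      obtain ⟨h1, hdvd⟩ := hc
      set k₀ : ℤ := (q.2 - p.2) / (s : ℤ) with hk₀
      have hmul : k₀ * (s : ℤ) = q.2 - p.2 := Int.ediv_mul_cancel hdvd
      have hqk : q = ((p.1, p.2 + k₀ * s) : I × ℤ) := by
        refine Prod.ext h1.symm ?_
        show q.2 = p.2 + k₀ * s
        linarith [hmul]
      have hk0K : k₀ ∈ Kset N s := by
        refine Finset.mem_image.2 ⟨(p.2, q.2), ?_, rfl⟩
        exact Finset.mem_product.2 ⟨(Finset.mem_product.1 hp).2, (Finset.mem_product.1 hq).2⟩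
      rw [Finset.sum_eq_single_of_mem k₀ hk0K]
      · rw [if_pos hqk]
      · intro k hk hne
        rw [if_neg]
        intro hqe
        apply hne
        have h2 : q.2 = p.2 + k₀ * (s : ℤ) := by rw [hqk]
        have h2' : q.2 = p.2 + k * (s : ℤ) := by rw [hqe]
        have h3 : k₀ * (s : ℤ) = k * s := by linarith
        exact (mul_right_cancel₀ hsne h3).symm
    · rw [if_neg hc]
      apply Finset.sum_eq_zero
      intro k _
      rw [if_neg]
      intro hqe
      apply hc
      refine ⟨(congrArg Prod.fst hqe).symm, ?_⟩
      have h2 : q.2 = p.2 + k * (s : ℤ) := congrArg Prod.snd hqe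
      exact ⟨k, by rw [h2]; ring⟩
  rw [rhs_eq]
  -- LHS
  have lhs_eq : ∀ x : I × ZMod s, red s f x * red s g x
      = ∑ p ∈ T, ∑ q ∈ T,
          (if ((p.1, (p.2 : ZMod s)) : I × ZMod s) = x then f p else 0)
            * (if ((q.1, (q.2 : ZMod s)) : I × ZMod s) = x then g q else 0) := by
    intro x
    rw [red_eq_sum_T s hf x, red_eq_sum_T s hg x, Finset.sum_mul_sum]
  rw [Finset.sum_congr rfl fun x _ => lhs_eq x]
  rw [Finset.sum_comm]
  refine Finset.sum_congr rfl fun p _ => ?_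
  rw [Finset.sum_comm]
  refine Finset.sum_congr rfl fun q _ => ?_
  rw [Finset.sum_eq_single_of_mem ((p.1, (p.2 : ZMod s)) : I × ZMod s) (Finset.mem_univ _)]
  · rw [if_pos rfl, mul_ite, mul_zero]
    refine if_congr ?_ rfl rfl
    rw [Prod.mk.injEq, ZMod.intCast_eq_intCast_iff, Int.modEq_iff_dvd, dvd_sub_comm]
    exact and_congr eq_comm (by rw [dvd_sub_comm])
  · intro x _ hx
    rw [if_neg (fun h => hx h.symm), zero_mul]

end Master

section Eval

variable {I : Type} [Fintype I] (s : ℕ) [NeZero s]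

lemma mapDomain_red (u : I × ℤ →₀ ℕ) (x : I × ZMod s) :
    ((Finsupp.mapDomain (fun p : I × ℤ => ((p.1, (p.2 : ZMod s)) : I × ZMod s)) u) x : ℤ)
      = red s (fun p => (u p : ℤ)) x := by
  classical
  set Nu : Finset ℤ := u.support.image Prod.snd with hNu
  have hN : ∀ p : I × ℤ, ((u p : ℤ)) ≠ 0 → p.2 ∈ Nu := by
    intro p hp
    exact Finset.mem_image.2 ⟨p, Finsupp.mem_support_iff.2 (by exact_mod_cast hp), rfl⟩
  rw [red_eq_sum_T s hN x]
  have hnat : (Finsupp.mapDomain (fun p : I × ℤ => ((p.1, (p.2 : ZMod s)) : I × ZMod s)) u) x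
      = ∑ a ∈ u.support, if ((a.1, (a.2 : ZMod s)) : I × ZMod s) = x then u a else 0 := by
    rw [Finsupp.mapDomain, Finsupp.sum_apply, Finsupp.sum]
    exact Finset.sum_congr rfl fun a _ => Finsupp.single_apply
  rw [hnat]
  push_cast [apply_ite (Nat.cast : ℕ → ℤ)]
  apply Finset.sum_subset
  · intro a ha
    exact Finset.mem_product.2 ⟨Finset.mem_univ _,
      Finset.mem_image.2 ⟨a, ha, rfl⟩⟩
  · intro a _ ha
    rw [Finsupp.notMem_support_iff.1 ha]
    simp

lemma shift_apply (K : ℤ) (u : I × ℤ →₀ ℕ) (p : I × ℤ) :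
    Finsupp.mapDomain (fun q : I × ℤ => ((q.1, q.2 - K) : I × ℤ)) u p = u (p.1, p.2 + K) := by
  have hinj : Function.Injective (fun q : I × ℤ => ((q.1, q.2 - K) : I × ℤ)) := by
    intro a b h
    simp only [Prod.mk.injEq] at h
    exact Prod.ext h.1 (by omega)
  have hp : p = (fun q : I × ℤ => ((q.1, q.2 - K) : I × ℤ)) (p.1, p.2 + K) := by
    refine Prod.ext rfl ?_
    show p.2 = p.2 + K - K
    omega
  conv_lhs => rw [hp]
  exact Finsupp.mapDomain_apply hinj u (p.1, p.2 + K)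

end Eval

section Assembly

variable {I : Type} [Fintype I]

noncomputable def vv (m : MonZ I) : I × ℤ → ℤ := fun p => (m.v p : ℤ)
noncomputable def ww (m : MonZ I) : I × ℤ → ℤ := fun p => (m.w p : ℤ)
noncomputable def FF1 (m : MonZ I) : I × ℤ → ℤ := fun p => vv m (p.1, p.2 + 1)
noncomputable def FF2 (m : MonZ I) : I × ℤ → ℤ := fun p => ww m (p.1, p.2 + 1)
noncomputable def GG (A : I → I → ℤ) (m : MonZ I) : I × ℤ → ℤ :=
  fun p => ww m p - vv m (p.1, p.2 + (-1)) - vv m (p.1, p.2 + 1)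
    + ∑ j : I, if A p.1 j = -1 then vv m (j, p.2) else 0

noncomputable def BB (m : MonZ I) : Finset ℤ := (m.v.support ∪ m.w.support).image Prod.snd

noncomputable def NN (m : MonZ I) : Finset ℤ :=
  BB m ∪ (BB m).image (· + 1) ∪ (BB m).image (· + (-1))

lemma vv_memB (m : MonZ I) : ∀ p : I × ℤ, vv m p ≠ 0 → p.2 ∈ BB m := by
  intro p hp
  refine Finset.mem_image.2 ⟨p, Finset.mem_union_left _ (Finsupp.mem_support_iff.2 ?_), rfl⟩
  intro h
  exact hp (by simp [vv, h])

lemma ww_memB (m : MonZ I) : ∀ p : I × ℤ, ww m p ≠ 0 → p.2 ∈ BB m := by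
  intro p hp
  refine Finset.mem_image.2 ⟨p, Finset.mem_union_right _ (Finsupp.mem_support_iff.2 ?_), rfl⟩
  intro h
  exact hp (by simp [ww, h])

lemma B_subset_N (m : MonZ I) : BB m ⊆ NN m := fun n hn =>
  Finset.mem_union_left _ (Finset.mem_union_left _ hn)

lemma hvN (m : MonZ I) : ∀ p : I × ℤ, vv m p ≠ 0 → p.2 ∈ NN m :=
  fun p hp => B_subset_N m (vv_memB m p hp)

lemma hwN (m : MonZ I) : ∀ p : I × ℤ, ww m p ≠ 0 → p.2 ∈ NN m :=
  fun p hp => B_subset_N m (ww_memB m p hp)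

lemma hF1N (m : MonZ I) : ∀ p : I × ℤ, FF1 m p ≠ 0 → p.2 ∈ NN m := by
  intro p hp
  have hb : p.2 + 1 ∈ BB m := vv_memB m (p.1, p.2 + 1) hp
  exact Finset.mem_union_right _ (Finset.mem_image.2 ⟨p.2 + 1, hb, by ring⟩)

lemma hF2N (m : MonZ I) : ∀ p : I × ℤ, FF2 m p ≠ 0 → p.2 ∈ NN m := by
  intro p hp
  have hb : p.2 + 1 ∈ BB m := ww_memB m (p.1, p.2 + 1) hp
  exact Finset.mem_union_right _ (Finset.mem_image.2 ⟨p.2 + 1, hb, by ring⟩)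

lemma hFm1N (m : MonZ I) :
    ∀ p : I × ℤ, (fun q : I × ℤ => vv m (q.1, q.2 + (-1))) p ≠ 0 → p.2 ∈ NN m := by
  intro p hp
  have hb : p.2 + (-1) ∈ BB m := vv_memB m (p.1, p.2 + (-1)) hp
  exact Finset.mem_union_left _
    (Finset.mem_union_right _ (Finset.mem_image.2 ⟨p.2 + (-1), hb, by ring⟩))

lemma hFp1N (m : MonZ I) :
    ∀ p : I × ℤ, (fun q : I × ℤ => vv m (q.1, q.2 + 1)) p ≠ 0 → p.2 ∈ NN m := hF1N m

lemma hGN (A : I → I → ℤ) (m : MonZ I) : ∀ p : I × ℤ, GG A m p ≠ 0 → p.2 ∈ NN m := by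
  intro p hp
  by_contra hmem
  apply hp
  have h1 : ww m p = 0 := by by_contra h; exact hmem (hwN m p h)
  have h2 : vv m (p.1, p.2 + (-1)) = 0 := by by_contra h; exact hmem (hFm1N m p h)
  have h3 : vv m (p.1, p.2 + 1) = 0 := by by_contra h; exact hmem (hF1N m p h)
  have h4 : ∀ j : I, vv m (j, p.2) = 0 := by
    intro j; by_contra h; exact hmem (B_subset_N m (vv_memB m (j, p.2) h))
  show ww m p - vv m (p.1, p.2 + (-1)) - vv m (p.1, p.2 + 1)
      + (∑ j : I, if A p.1 j = -1 then vv m (j, p.2) else 0) = 0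
  rw [h1, h2, h3, Finset.sum_eq_zero fun j _ => by rw [h4 j, ite_self]]
  ring

lemma mul_left_support_finite {N : Finset ℤ} {f : I × ℤ → ℤ}
    (hf : ∀ p : I × ℤ, f p ≠ 0 → p.2 ∈ N) (g : I × ℤ → ℤ) (h : I × ℤ → I × ℤ) :
    (Function.support fun p : I × ℤ => f p * g (h p)).Finite := by
  apply Set.Finite.subset (Finset.finite_toSet ((Finset.univ : Finset I) ×ˢ N))
  intro p hp
  simp only [Function.mem_support] at hp
  have : f p ≠ 0 := fun h0 => hp (by rw [h0, zero_mul])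
  exact Finset.mem_coe.2 (Finset.mem_product.2 ⟨Finset.mem_univ _, hf _ this⟩)

end Assembly
/-- let `ε` be a primitive `s`-th root of unity and `q` not a root of
unity.  For a monomial `m = ∏ W_{i,aq^n}^{N_{i,n}} V_{i,aq^n}^{M_{i,n}}` with finitely
supported exponents, the dimension identity
`d(e^V e^W, e^V e^W) = Σ_{k ∈ ℤ} d_q(m, m[ks])` holds, where `e^V e^W` is the mod-`s`
reduction of `m`, `d` is computed with parameter `ε` and `d_q` with parameter `q`. -/
theorem dimension_identity_root_of_unity {I : Type} [Fintype I] (A : I → I → ℤ)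
    (hsymm : ∀ i j, A i j = A j i) (hdiag : ∀ i, A i i = 2)
    (hoff : ∀ i j, i ≠ j → A i j = 0 ∨ A i j = -1)
    (s : ℕ) (hs : 0 < s) (ε q : ℂ)
    (hε : IsPrimitiveRoot ε s) (hq : ∀ k : ℕ, 0 < k → q ^ k ≠ 1)
    (m : MonZ I) :
    ddC s A (reduceM s m) (reduceM s m) = ∑ᶠ k : ℤ, ddZ A m (shiftM (k * s) m) := by
  
  classical
  haveI : NeZero s := ⟨hs.ne'⟩
  -- Step 1: rewrite each `ddZ` term as a sum of two bilinear pairings.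
  have key1 : ∀ k : ℤ, ddZ A m (shiftM (k * s) m)
      = (∑ᶠ p : I × ℤ, FF1 m p * GG A m (p.1, p.2 + k * s))
        + ∑ᶠ p : I × ℤ, FF2 m p * vv m (p.1, p.2 + k * s) := by
    intro k
    have h1 : (Function.support fun p : I × ℤ =>
        FF1 m p * GG A m (p.1, p.2 + k * (s : ℤ))).Finite :=
      mul_left_support_finite (hF1N m) (GG A m) (fun p => (p.1, p.2 + k * s))
    have h2 : (Function.support fun p : I × ℤ =>
        FF2 m p * vv m (p.1, p.2 + k * (s : ℤ))).Finite :=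
      mul_left_support_finite (hF2N m) (vv m) (fun p => (p.1, p.2 + k * s))
    rw [ddZ, ← finsum_add_distrib h1 h2]
    apply finsum_congr
    intro p
    have sv : ∀ q : I × ℤ, (((shiftM (k * s) m).v q : ℕ) : ℤ) = vv m (q.1, q.2 + k * s) := by
      intro q
      show ((Finsupp.mapDomain (fun r : I × ℤ => ((r.1, r.2 - k * s) : I × ℤ)) m.v) q : ℤ)
        = vv m (q.1, q.2 + k * s)
      rw [shift_apply]; rfl
    have sw : ∀ q : I × ℤ, (((shiftM (k * s) m).w q : ℕ) : ℤ) = ww m (q.1, q.2 + k * s) := by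
      intro q
      show ((Finsupp.mapDomain (fun r : I × ℤ => ((r.1, r.2 - k * s) : I × ℤ)) m.w) q : ℤ)
        = ww m (q.1, q.2 + k * s)
      rw [shift_apply]; rfl
    simp only [uZ, sv, sw]
    rw [show p.2 - 1 + k * (s : ℤ) = p.2 + k * s + (-1) from by ring,
        show p.2 + 1 + k * (s : ℤ) = p.2 + k * s + 1 from by ring]
    rfl
  rw [finsum_congr key1,
    finsum_add_distrib (master_support s (hF1N m) (hGN A m))
      (master_support s (hF2N m) (hvN m)),
    ← master s (hF1N m) (hGN A m), ← master s (hF2N m) (hvN m),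
    ← Finset.sum_add_distrib]
  -- Step 2: compare with `ddC` pointwise.
  rw [ddC, finsum_eq_sum_of_fintype]
  refine Finset.sum_congr rfl fun x _ => ?_
  obtain ⟨x1, x2⟩ := x
  have redV : ∀ y : I × ZMod s, (((reduceM s m).v y : ℕ) : ℤ) = red s (vv m) y :=
    fun y => mapDomain_red s m.v y
  have redW : ∀ y : I × ZMod s, (((reduceM s m).w y : ℕ) : ℤ) = red s (ww m) y :=
    fun y => mapDomain_red s m.w y
  have r1 : red s (FF1 m) (x1, x2) = red s (vv m) (x1, x2 + 1) := by
    have h := red_shift s (vv m) 1 (x1, x2)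
    norm_num at h
    exact h
  have r2 : red s (FF2 m) (x1, x2) = red s (ww m) (x1, x2 + 1) := by
    have h := red_shift s (ww m) 1 (x1, x2)
    norm_num at h
    exact h
  have rG : red s (GG A m) (x1, x2)
      = red s (ww m) (x1, x2) - red s (vv m) (x1, x2 - 1) - red s (vv m) (x1, x2 + 1)
        + ∑ j : I, if A x1 j = -1 then red s (vv m) (j, x2) else 0 := by
    rw [red_eq_sum s (hGN A m) (x1, x2)]
    have hsplit : ∀ n : ℤ, (if ((n : ZMod s) = x2) then GG A m (x1, n) else 0)
        = ((if ((n : ZMod s) = x2) then ww m (x1, n) else 0)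
            - (if ((n : ZMod s) = x2) then vv m (x1, n + (-1)) else 0)
            - (if ((n : ZMod s) = x2) then vv m (x1, n + 1) else 0))
          + ∑ j : I, if ((n : ZMod s) = x2) then
              (if A x1 j = -1 then vv m (j, n) else 0) else 0 := by
      intro n
      by_cases h : ((n : ZMod s) = x2) <;> simp [h, GG]
    rw [Finset.sum_congr rfl fun n _ => hsplit n, Finset.sum_add_distrib,
      Finset.sum_sub_distrib, Finset.sum_sub_distrib]
    congr 1
    · congr 1
      · congr 1
        · exact (red_eq_sum s (hwN m) (x1, x2)).symm
        · have h := red_shift s (vv m) (-1) (x1, x2)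
          rw [red_eq_sum s (hFm1N m) (x1, x2)] at h
          rw [h]
          have : (x2 + ((-1 : ℤ) : ZMod s)) = x2 - 1 := by push_cast; ring
          rw [this]
      · have h := red_shift s (vv m) 1 (x1, x2)
        rw [red_eq_sum s (hFp1N m) (x1, x2)] at h
        rw [h]
        have : (x2 + ((1 : ℤ) : ZMod s)) = x2 + 1 := by push_cast; ring
        rw [this]
    · rw [Finset.sum_comm]
      refine Finset.sum_congr rfl fun j _ => ?_
      by_cases hA : A x1 j = -1
      · simp only [if_pos hA]
        exact (red_eq_sum s (hvN m) (j, x2)).symm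
      · simp [hA]
  simp only [uC, redV, redW]
  rw [r1, r2, rG]
end
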